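/- arXiv:1706.06059 — 4 statements merged into one kernel-verified Lean document; each statement's English description precedes it below -/
import Mathlib

section
/- (Elder Rule) Let k be a field and let T be a valid chiral merge tree with Elder barcode Elder(T) = {J₁, …, J_N}. Then the persistent vector space F_{S_T} freely generated by the persistent set S_T is naturally isomorphic, as a functor from the poset (ℝ, ≤) to k-vector spaces, to the direct sum ⊕_{i=1}^{N} k_{J_i} of the interval modules of the bars of Elder(T). -/
open scoped Classical

/-- Chiral merge trees: binary trees with a real label at every node,
and a left/right ordering of the children of each internal node. -/
inductive CMT : Type where
  | leaf (a : ℝ) : CMT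
  | node (a : ℝ) (l r : CMT) : CMT

namespace CMT

/-- The label of the root of a chiral merge tree. -/
def label : CMT → ℝ
  | leaf a => a
  | node a _ _ => a

/-- The minimum leaf label of a chiral merge tree. -/
def minLeaf : CMT → ℝ
  | leaf a => a
  | node _ l r => min (minLeaf l) (minLeaf r)

/-- The list of all labels of nodes of a chiral merge tree. -/
def labelList : CMT → List ℝ
  | leaf a => [a]
  | node a l r => a :: (labelList l ++ labelList r)

/-- In every subtree `node a l r`, the root labels of `l` and `r` are `< a`. -/
def LocalValid : CMT → Prop
  | leaf _ => True
  | node a l r => label l < a ∧ label r < a ∧ LocalValid l ∧ LocalValid r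

/-- A chiral merge tree is valid if its labels are pairwise distinct and in every
subtree `node a l r` the root labels of `l` and `r` are strictly less than `a`. -/
def Valid (T : CMT) : Prop := T.labelList.Nodup ∧ T.LocalValid

/-- The Elder barcode of a chiral merge tree: `Elder (leaf a) = {[a,∞)}`; for
`node a l r`, with `m` the larger of the two minimum leaf labels of `l` and `r`,
the unbounded bar `[m,∞)` of `Elder l ∪ Elder r` is replaced by `[m, a)`. -/
def Elder : CMT → Set (Set ℝ)
  | leaf a => {Set.Ici a}
  | node a l r =>
      insert (Set.Ico (max (minLeaf l) (minLeaf r)) a)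
        ((Elder l ∪ Elder r) \ {Set.Ici (max (minLeaf l) (minLeaf r))})

/-- The subtree of a chiral merge tree at the address `w` (a word in
`{L,R}`, encoded as `false`/`true`), if it exists. -/
def subtree? : CMT → List Bool → Option CMT
  | t, [] => some t
  | leaf _, _ :: _ => none
  | node _ l _, false :: w => subtree? l w
  | node _ _ r, true :: w => subtree? r w

/-- The label of the node of `T` at the address `w`, if such a node exists. -/
def nodeLabel? (T : CMT) (w : List Bool) : Option ℝ := (T.subtree? w).map label

/-- `T.MemS t w` means: `w` is the address of a node `v` of `T` with label `≤ t`
whose parent, if it exists, has label `> t`.  Thus `S_T(t) = {w // T.MemS t w}`. -/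
def MemS (T : CMT) (t : ℝ) (w : List Bool) : Prop :=
  (∃ a, T.nodeLabel? w = some a ∧ a ≤ t) ∧
  (∀ a, w ≠ [] → T.nodeLabel? w.dropLast = some a → t < a)

/-- The in-order (left subtree, root, right subtree) traversal of the node
addresses of a chiral merge tree. -/
def addrList : CMT → List (List Bool)
  | leaf _ => [[]]
  | node _ l r =>
      (addrList l).map (List.cons false) ++ [[]] ++ (addrList r).map (List.cons true)

/-- The node at address `u` strictly precedes the node at address `v`
in the in-order order on the nodes of `T`. -/
def InOrderLT (T : CMT) (u v : List Bool) : Prop :=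
  T.addrList.idxOf u < T.addrList.idxOf v

/-- The node at address `u` precedes or equals the node at address `v`
in the in-order order on the nodes of `T`. -/
def InOrderLE (T : CMT) (u v : List Bool) : Prop :=
  T.addrList.idxOf u ≤ T.addrList.idxOf v

/-- The number of nodes of a chiral merge tree. -/
def numNodes : CMT → ℕ
  | leaf _ => 1
  | node _ l r => 1 + numNodes l + numNodes r

/-- The number of leaves of a chiral merge tree. -/
def numLeaves : CMT → ℕ
  | leaf _ => 1
  | node _ l r => numLeaves l + numLeaves r

/-- The set of labels of leaves of a chiral merge tree. -/
def leafLabels : CMT → Set ℝ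
  | leaf a => {a}
  | node _ l r => leafLabels l ∪ leafLabels r

/-- The set of labels of internal (binary) nodes of a chiral merge tree. -/
def internalLabels : CMT → Set ℝ
  | leaf _ => ∅
  | node a l r => insert a (internalLabels l ∪ internalLabels r)

/-- The in-order traversal list of the nodes (as subtrees) of a chiral merge tree. -/
def trav : CMT → List CMT
  | leaf a => [leaf a]
  | node a l r => trav l ++ [node a l r] ++ trav r

/-- Whether a node is a leaf. -/
def isLeaf : CMT → Prop
  | leaf _ => True
  | node _ _ _ => False

end CMT
/-- The `j`-th bar of the barcode: `I₁ = [b₁, ∞)` (index `0`) and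
`I_j = [b_j, d_j)` for `j ≥ 2` (indices `≠ 0`). -/
def bar {N : ℕ} (b d : Fin N → ℝ) (j : Fin N) : Set ℝ :=
  if (j : ℕ) = 0 then Set.Ici (b j) else Set.Ico (b j) (d j)

/-- The barcode `B = {I₁, …, I_N}` as a set of intervals. -/
def barcodeOf {N : ℕ} (b d : Fin N → ℝ) : Set (Set ℝ) := Set.range (bar b d)

/-- `μ_B(I_j)`: the number of indices `k` with `I_j` strictly contained in `I_k`. -/
noncomputable def mu {N : ℕ} (b d : Fin N → ℝ) (j : Fin N) : ℕ :=
  Nat.card {k : Fin N // bar b d j ⊂ bar b d k}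
/-- The sublevel set `{x ∈ [0,1] : f x ≤ t}`. -/
def sublevel (f : ℝ → ℝ) (t : ℝ) : Set ℝ := {x | x ∈ Set.Icc (0:ℝ) 1 ∧ f x ≤ t}

/-- The set of connected components of `A ⊆ ℝ` (maximal connected subsets). -/
def Components (A : Set ℝ) : Set (Set ℝ) := {C | ∃ x ∈ A, C = connectedComponentIn A x}

/-- The left-to-right strict order on subsets of `ℝ`:
`C` is entirely to the left of `D`. -/
def CompLT (C D : Set ℝ) : Prop := ∀ x ∈ C, ∀ y ∈ D, x < y

/-- `f` and `g` are graph-equivalent: there is an increasing homeomorphism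
`φ : [0,1] → [0,1]` with `f = g ∘ φ` on `[0,1]`. -/
def GraphEquiv (f g : ℝ → ℝ) : Prop :=
  ∃ φ : ℝ → ℝ, ContinuousOn φ (Set.Icc 0 1) ∧ StrictMonoOn φ (Set.Icc 0 1) ∧
    Set.MapsTo φ (Set.Icc 0 1) (Set.Icc 0 1) ∧
    Set.SurjOn φ (Set.Icc 0 1) (Set.Icc 0 1) ∧
    ∀ x ∈ Set.Icc (0:ℝ) 1, f x = g (φ x)

/-- `f : [0,1] → ℝ` is Morse-like: continuous, and there are
`0 = p₀ < p₁ < ⋯ < p_m = 1` such that `f` is strictly monotone on each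
`[p_{i-1}, p_i]`, consecutive intervals have opposite directions of monotonicity,
and the values `f(p₀), …, f(p_m)` are pairwise distinct. -/
def MorseLike (f : ℝ → ℝ) : Prop :=
  ContinuousOn f (Set.Icc 0 1) ∧
  ∃ (m : ℕ) (p : ℕ → ℝ), p 0 = 0 ∧ p m = 1 ∧ (∀ i < m, p i < p (i + 1)) ∧
    (∀ i < m, StrictMonoOn f (Set.Icc (p i) (p (i + 1))) ∨
      StrictAntiOn f (Set.Icc (p i) (p (i + 1)))) ∧
    (∀ i, i + 1 < m →
      (StrictMonoOn f (Set.Icc (p i) (p (i + 1))) ↔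
        StrictAntiOn f (Set.Icc (p (i + 1)) (p (i + 2))))) ∧
    (∀ i j, i ≤ m → j ≤ m → i ≠ j → f (p i) ≠ f (p j))

/-- `f` realizes the barcode `B`: for all `r ≤ t`, the cardinality of the image of the
inclusion-induced map on connected components of sublevel sets (i.e. the number of
components of `{f ≤ t}` containing some component of `{f ≤ r}`) equals the number of
intervals of `B` containing both `r` and `t`. -/
def RealizesBarcode (f : ℝ → ℝ) (B : Set (Set ℝ)) : Prop :=
  ∀ r t : ℝ, r ≤ t →
    {D | D ∈ Components (sublevel f t) ∧ ∃ C ∈ Components (sublevel f r), C ⊆ D}.ncard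
      = {I | I ∈ B ∧ r ∈ I ∧ t ∈ I}.ncard

/-- `f` realizes the valid chiral merge tree `T`: for each `t` there is an
order-isomorphism `α t` from the components of `{f ≤ t}` (left-to-right order) to
`S_T(t)` (in-order order), commuting with the inclusion-induced maps on components
and the shift maps `σ_{tr}` (which send each node to its unique ancestor in `S_T(t)`;
being an ancestor is expressed by the address being a prefix). -/
def RealizesCMT (f : ℝ → ℝ) (T : CMT) : Prop :=
  ∃ α : (t : ℝ) → {C : Set ℝ // C ∈ Components (sublevel f t)} →
      {w : List Bool // T.MemS t w},
    (∀ t : ℝ, Function.Bijective (α t)) ∧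
    (∀ (t : ℝ) (C D : {C : Set ℝ // C ∈ Components (sublevel f t)}),
      CompLT C.1 D.1 ↔ T.InOrderLT (α t C).1 (α t D).1) ∧
    (∀ r t : ℝ, r ≤ t →
      ∀ (C : {C : Set ℝ // C ∈ Components (sublevel f r)})
        (D : {C : Set ℝ // C ∈ Components (sublevel f t)}),
        C.1 ⊆ D.1 → (α t D).1 <+: (α r C).1)

/-- `f` is piecewise linear on `[0,1]`. -/
def PiecewiseLinear (f : ℝ → ℝ) : Prop :=
  ∃ (m : ℕ) (p : ℕ → ℝ), p 0 = 0 ∧ p m = 1 ∧ (∀ i < m, p i < p (i + 1)) ∧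
    ∀ i < m, ∃ c e : ℝ, ∀ x ∈ Set.Icc (p i) (p (i + 1)), f x = c * x + e
/-- The interval module `k_I` at time `t` is the `k`-vector space
`PLift (t ∈ I) → k` of functions from (proofs of) `t ∈ I` to `k`, which is
one-dimensional if `t ∈ I` and the zero space otherwise.  `intervalShift k I r t` is
its shift map `k_I(r) → k_I(t)`: the identity when `r, t ∈ I` and zero otherwise. -/
noncomputable def intervalShift (k : Type) [Field k] (I : Set ℝ) (r t : ℝ) :
    (PLift (r ∈ I) → k) →ₗ[k] (PLift (t ∈ I) → k) where
  toFun x := fun _ => if hr : r ∈ I then x ⟨hr⟩ else 0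
  map_add' x y := by
    funext ht
    by_cases hr : r ∈ I <;> simp [hr]
  map_smul' c x := by
    funext ht
    by_cases hr : r ∈ I <;> simp [hr]

open scoped DirectSum

/-!
Each leaf `m` of a valid tree owns one bar, `leafBar m`: it is born at `m` and dies at the
label of the first ancestor where the subtree of `m` merges with a subtree whose minimum leaf is
smaller (never, for the minimum leaf of `T`), and `Elder T` is exactly the set of these bars.
A node of `S_T(t)` is determined by the minimum leaf `m` of its subtree, and `t` lies in the
bar of `m`.

The isomorphism sends the basis vector of that node to the sum of the generators of the bars of
the elders of `m`: `m`, the leaf whose bar absorbed the bar of `m`, the leaf that absorbed that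
one, and so on. All these bars contain `t`, and the change of basis is unitriangular, with
inverse obtained by telescoping along the elders. Naturality: under a shift map to time `t`,
the elders that are lost are exactly those whose bars have ended by `t`.
-/

namespace CMT

/-- The child of `node a l r` in direction `b` (`false` is left, as in `subtree?`). Lemmas about
a node are stated for `child l r b` and its sibling `child l r !b`, which covers both sides. -/
def child (l r : CMT) : Bool → CMT
  | false => l
  | true => r

@[simp] theorem child_false (l r : CMT) : child l r false = l := rfl

@[simp] theorem child_true (l r : CMT) : child l r true = r := rfl

theorem forall_child {P : CMT → Prop} {l r : CMT} (hl : P l) (hr : P r) :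
    ∀ b, P (child l r b)
  | false => hl
  | true => hr

theorem child_induction {P : CMT → Prop} (leaf : ∀ a, P (leaf a))
    (node : ∀ a l r, (∀ b, P (child l r b)) → P (node a l r)) : ∀ T, P T
  | .leaf a => leaf a
  | .node a l r => node a l r (forall_child (child_induction leaf node l)
      (child_induction leaf node r))

theorem minLeaf_mem : ∀ T : CMT, T.minLeaf ∈ T.leafLabels
  | leaf a => rfl
  | node _ l r => by
      show min _ _ ∈ _
      rcases min_choice l.minLeaf r.minLeaf with h | h <;> rw [h]
      exacts [Or.inl (minLeaf_mem l), Or.inr (minLeaf_mem r)]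

theorem minLeaf_le : ∀ {T : CMT} {m : ℝ}, m ∈ T.leafLabels → T.minLeaf ≤ m
  | leaf _, _, hm => hm.symm.le
  | node _ _ _, _, Or.inl hm => (min_le_left _ _).trans (minLeaf_le hm)
  | node _ _ _, _, Or.inr hm => (min_le_right _ _).trans (minLeaf_le hm)

theorem le_label_of_mem_leafLabels :
    ∀ {T : CMT} {m : ℝ}, T.LocalValid → m ∈ T.leafLabels → m ≤ T.label
  | leaf _, _, _, hm => hm.le
  | node _ _ _, _, ⟨hl, _, hvl, _⟩, Or.inl hm => (le_label_of_mem_leafLabels hvl hm).trans hl.le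
  | node _ _ _, _, ⟨_, hr, _, hvr⟩, Or.inr hm => (le_label_of_mem_leafLabels hvr hm).trans hr.le

theorem minLeaf_le_label {T : CMT} (hT : T.LocalValid) : T.minLeaf ≤ T.label :=
  le_label_of_mem_leafLabels hT T.minLeaf_mem

theorem mem_labelList_of_mem_leafLabels :
    ∀ {T : CMT} {m : ℝ}, m ∈ T.leafLabels → m ∈ T.labelList
  | leaf _, _, hm => List.mem_singleton.2 hm
  | node _ _ _, _, Or.inl hm =>
      List.mem_cons_of_mem _ (List.mem_append_left _ (mem_labelList_of_mem_leafLabels hm))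
  | node _ _ _, _, Or.inr hm =>
      List.mem_cons_of_mem _ (List.mem_append_right _ (mem_labelList_of_mem_leafLabels hm))

section Node

variable {a : ℝ} {l r : CMT}

theorem leafLabels_node (b : Bool) :
    (node a l r).leafLabels = (child l r b).leafLabels ∪ (child l r !b).leafLabels := by
  cases b
  · rfl
  · exact Set.union_comm _ _

theorem minLeaf_node (b : Bool) :
    (node a l r).minLeaf = min (child l r b).minLeaf (child l r !b).minLeaf := by
  cases b
  · rfl
  · exact min_comm _ _

theorem mem_leafLabels_node {m : ℝ} {b : Bool} (hm : m ∈ (child l r b).leafLabels) :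
    m ∈ (node a l r).leafLabels := by
  rw [leafLabels_node b]
  exact Or.inl hm

theorem exists_mem_child {m : ℝ} (hm : m ∈ (node a l r).leafLabels) :
    ∃ b, m ∈ (child l r b).leafLabels := by
  rcases hm with hm | hm
  exacts [⟨false, hm⟩, ⟨true, hm⟩]

theorem LocalValid.label_child_lt (h : (node a l r).LocalValid) :
    ∀ b, (child l r b).label < a :=
  forall_child (P := fun s => s.label < a) h.1 h.2.1

theorem LocalValid.of_node (h : (node a l r).LocalValid) : ∀ b, (child l r b).LocalValid :=
  forall_child (P := LocalValid) h.2.2.1 h.2.2.2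

theorem Valid.of_node (h : (node a l r).Valid) : ∀ b, (child l r b).Valid := by
  obtain ⟨hn, hv⟩ := h
  simp only [labelList, List.nodup_cons, List.nodup_append] at hn
  exact forall_child (P := Valid) ⟨hn.2.1, hv.of_node false⟩ ⟨hn.2.2.1, hv.of_node true⟩

theorem Valid.not_mem_child_not (h : (node a l r).Valid) {b : Bool} {m : ℝ}
    (hm : m ∈ (child l r b).leafLabels) : m ∉ (child l r !b).leafLabels := by
  obtain ⟨hn, -⟩ := h
  simp only [labelList, List.nodup_cons, List.nodup_append] at hn
  intro hm'
  cases b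
  · exact hn.2.2.2 _ (mem_labelList_of_mem_leafLabels hm) _
      (mem_labelList_of_mem_leafLabels hm') rfl
  · exact hn.2.2.2 _ (mem_labelList_of_mem_leafLabels hm') _
      (mem_labelList_of_mem_leafLabels hm) rfl

theorem Valid.minLeaf_child_ne (h : (node a l r).Valid) (b : Bool) :
    (child l r b).minLeaf ≠ (child l r !b).minLeaf := fun he =>
  h.not_mem_child_not (b := b) (minLeaf_mem _) (he ▸ minLeaf_mem _)

theorem Valid.exists_minLeaf_lt (h : (node a l r).Valid) :
    ∃ b, (child l r b).minLeaf < (child l r !b).minLeaf := by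
  rcases (h.minLeaf_child_ne false).lt_or_gt with hlt | hlt
  exacts [⟨false, hlt⟩, ⟨true, hlt⟩]

theorem minLeaf_node_of_lt {b : Bool}
    (hlt : (child l r b).minLeaf < (child l r !b).minLeaf) :
    (node a l r).minLeaf = (child l r b).minLeaf :=
  (minLeaf_node b).trans (min_eq_left hlt.le)

end Node

/-- The bar of the Elder barcode that is born at the leaf `m`. -/
noncomputable def leafBar : CMT → ℝ → Set ℝ
  | leaf a, _ => Set.Ici a
  | node a l r, m =>
      if m ∈ l.leafLabels then
        (if m = l.minLeaf ∧ r.minLeaf < l.minLeaf then Set.Ico m a else leafBar l m)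
      else
        (if m = r.minLeaf ∧ l.minLeaf < r.minLeaf then Set.Ico m a else leafBar r m)

section Node

variable {a m : ℝ} {l r : CMT}

theorem leafBar_node (h : (node a l r).Valid) {b : Bool} (hm : m ∈ (child l r b).leafLabels) :
    (node a l r).leafBar m =
      if m = (child l r b).minLeaf ∧ (child l r !b).minLeaf < (child l r b).minLeaf then
        Set.Ico m a
      else (child l r b).leafBar m := by
  cases b
  · exact if_pos hm
  · exact if_neg (h.not_mem_child_not (b := true) hm)

theorem leafBar_node_of_not_lt (h : (node a l r).Valid) {b : Bool}
    (hm : m ∈ (child l r b).leafLabels)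
    (hlt : ¬ (child l r !b).minLeaf < (child l r b).minLeaf) :
    (node a l r).leafBar m = (child l r b).leafBar m := by
  rw [leafBar_node h hm, if_neg (fun hc => hlt hc.2)]

end Node

theorem leafBar_eq_Ici_or_Ico {T : CMT} (hT : T.Valid) {m : ℝ} (hm : m ∈ T.leafLabels) :
    T.leafBar m = Set.Ici m ∨ ∃ d, m < d ∧ T.leafBar m = Set.Ico m d := by
  induction T using child_induction generalizing m with
  | leaf a => exact Or.inl (by rw [Set.mem_singleton_iff.1 hm]; rfl)
  | node a l r ih =>
    obtain ⟨b, hb⟩ := exists_mem_child hm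
    rw [leafBar_node hT hb]
    split_ifs
    · exact Or.inr ⟨a, (le_label_of_mem_leafLabels (hT.of_node b).2 hb).trans_lt
        (hT.2.label_child_lt b), rfl⟩
    · exact ih b (hT.of_node b) hb

theorem sInf_leafBar {T : CMT} (hT : T.Valid) {m : ℝ} (hm : m ∈ T.leafLabels) :
    sInf (T.leafBar m) = m := by
  rcases leafBar_eq_Ici_or_Ico hT hm with he | ⟨d, hd, he⟩ <;> rw [he]
  exacts [csInf_Ici, csInf_Ico hd]

theorem le_of_mem_leafBar {T : CMT} (hT : T.Valid) {m t : ℝ} (hm : m ∈ T.leafLabels)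
    (ht : t ∈ T.leafBar m) : m ≤ t := by
  rcases leafBar_eq_Ici_or_Ico hT hm with he | ⟨d, -, he⟩ <;> rw [he] at ht
  exacts [ht, ht.1]

theorem eq_of_leafBar_eq_Ici {T : CMT} (hT : T.Valid) {m x : ℝ} (hm : m ∈ T.leafLabels)
    (he : T.leafBar m = Set.Ici x) : m = x := by
  rw [← sInf_leafBar hT hm, he, csInf_Ici]

theorem leafBar_minLeaf {T : CMT} (hT : T.Valid) : T.leafBar T.minLeaf = Set.Ici T.minLeaf := by
  induction T using child_induction with
  | leaf a => rfl
  | node a l r ih =>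
    obtain ⟨b, hlt⟩ := hT.exists_minLeaf_lt
    rw [minLeaf_node_of_lt hlt, leafBar_node_of_not_lt hT (minLeaf_mem _) hlt.not_gt]
    exact ih b (hT.of_node b)

theorem leafBar_subset_Iio_label {T : CMT} (hT : T.Valid) {m : ℝ} (hm : m ∈ T.leafLabels)
    (hne : m ≠ T.minLeaf) : T.leafBar m ⊆ Set.Iio T.label := by
  induction T using child_induction generalizing m with
  | leaf a => exact absurd hm hne
  | node a l r ih =>
    obtain ⟨b, hb⟩ := exists_mem_child hm
    rw [leafBar_node hT hb]
    split_ifs with hc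
    · exact Set.Ico_subset_Iio_self
    · have hne' : m ≠ (child l r b).minLeaf := by
        rintro rfl
        refine hne (minLeaf_node_of_lt ((hT.minLeaf_child_ne b).lt_of_le ?_)).symm
        exact not_lt.1 fun hlt => hc ⟨rfl, hlt⟩
      exact (ih b (hT.of_node b) hb hne').trans
        (Set.Iio_subset_Iio (hT.2.label_child_lt b).le)

theorem elder_node {a : ℝ} {l r : CMT} (b : Bool) :
    (node a l r).Elder =
      insert (Set.Ico (max (child l r b).minLeaf (child l r !b).minLeaf) a)
        (((child l r b).Elder ∪ (child l r !b).Elder) \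
          {Set.Ici (max (child l r b).minLeaf (child l r !b).minLeaf)}) := by
  cases b
  · rfl
  · rw [Elder, max_comm, Set.union_comm]; rfl

theorem elder_eq_image {T : CMT} (hT : T.Valid) : T.Elder = T.leafBar '' T.leafLabels := by
  induction T using child_induction with
  | leaf a => simp [Elder, leafLabels, leafBar]
  | node a l r ih =>
    obtain ⟨b, hlt⟩ := hT.exists_minLeaf_lt
    set old := child l r b
    set young := child l r !b
    have hyoung : ∀ m ∈ young.leafLabels, (node a l r).leafBar m =
        if m = young.minLeaf ∧ old.minLeaf < young.minLeaf then Set.Ico m a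
        else young.leafBar m := by
      intro m hm
      simpa only [Bool.not_not] using leafBar_node hT (b := !b) hm
    have hold : ∀ m ∈ old.leafLabels, (node a l r).leafBar m = old.leafBar m := fun m hm =>
      leafBar_node_of_not_lt hT hm hlt.not_gt
    rw [elder_node (!b), Bool.not_not, max_eq_left hlt.le, ih b (hT.of_node b),
      ih (!b) (hT.of_node !b), leafLabels_node (!b), Bool.not_not, Set.image_union]
    ext I
    simp only [Set.mem_insert_iff, Set.mem_sdiff, Set.mem_union, Set.mem_image,
      Set.mem_singleton_iff]
    constructor
    · rintro (rfl | ⟨⟨m, hm, rfl⟩ | ⟨m, hm, rfl⟩, hne⟩)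
      · refine Or.inl ⟨young.minLeaf, minLeaf_mem young, ?_⟩
        rw [hyoung _ (minLeaf_mem young), if_pos ⟨rfl, hlt⟩]
      · refine Or.inl ⟨m, hm, ?_⟩
        rw [hyoung m hm, if_neg fun hc => hne (by rw [hc.1, leafBar_minLeaf (hT.of_node _)])]
      · exact Or.inr ⟨m, hm, hold m hm⟩
    · rintro (⟨m, hm, rfl⟩ | ⟨m, hm, rfl⟩)
      · rw [hyoung m hm]
        split_ifs with hc
        · exact Or.inl (by rw [hc.1])
        · exact Or.inr ⟨Or.inl ⟨m, hm, rfl⟩,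
            fun he => hc ⟨eq_of_leafBar_eq_Ici (hT.of_node _) hm he, hlt⟩⟩
      · rw [hold m hm]
        refine Or.inr ⟨Or.inr ⟨m, hm, rfl⟩, fun he => ?_⟩
        exact hT.not_mem_child_not hm
          (eq_of_leafBar_eq_Ici (hT.of_node _) hm he ▸ minLeaf_mem young)

/-- A total version of `subtree?`: past a leaf it stays at that leaf. -/
def subAt : CMT → List Bool → CMT
  | T, [] => T
  | leaf a, _ :: _ => leaf a
  | node _ l _, false :: w => subAt l w
  | node _ _ r, true :: w => subAt r w

@[simp] theorem subAt_nil (T : CMT) : T.subAt [] = T := by cases T <;> rfl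

@[simp] theorem subAt_node_cons {a : ℝ} {l r : CMT} (b : Bool) (w : List Bool) :
    (node a l r).subAt (b :: w) = (child l r b).subAt w := by
  cases b <;> rfl

theorem subAt_append : ∀ (T : CMT) (u v : List Bool), T.subAt (u ++ v) = (T.subAt u).subAt v
  | T, [], v => by rw [List.nil_append, subAt_nil]
  | leaf a, _ :: _, [] => rfl
  | leaf a, _ :: _, _ :: _ => rfl
  | node _ l r, b :: u, v => by
      rw [List.cons_append, subAt_node_cons, subAt_node_cons, subAt_append]

theorem leafLabels_subAt_subset : ∀ (T : CMT) (w : List Bool),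
    (T.subAt w).leafLabels ⊆ T.leafLabels
  | T, [] => by rw [subAt_nil]
  | leaf _, _ :: _ => subset_rfl
  | node _ l r, b :: w => by
      rw [subAt_node_cons, leafLabels_node b]
      exact (leafLabels_subAt_subset _ w).trans Set.subset_union_left

theorem LocalValid.subAt : ∀ {T : CMT} (w : List Bool), T.LocalValid → (T.subAt w).LocalValid
  | T, [], h => by rwa [subAt_nil]
  | leaf _, _ :: _, h => h
  | node _ l _, false :: w, h => LocalValid.subAt w h.2.2.1
  | node _ _ r, true :: w, h => LocalValid.subAt w h.2.2.2

theorem minLeaf_subAt_mem (T : CMT) (w : List Bool) : (T.subAt w).minLeaf ∈ T.leafLabels :=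
  leafLabels_subAt_subset T w (minLeaf_mem _)

theorem nodeLabel?_nil (T : CMT) : T.nodeLabel? [] = some T.label := by cases T <;> rfl

theorem nodeLabel?_node_cons {a : ℝ} {l r : CMT} (b : Bool) (w : List Bool) :
    (node a l r).nodeLabel? (b :: w) = (child l r b).nodeLabel? w := by
  cases b <;> rfl

theorem le_label_of_nodeLabel? : ∀ {T : CMT} {w : List Bool} {x : ℝ}, T.LocalValid →
    T.nodeLabel? w = some x → x ≤ T.label
  | T, [], x, _, hx => by rw [nodeLabel?_nil, Option.some_inj] at hx; exact hx.ge
  | leaf _, _ :: _, _, _, hx => by simp [nodeLabel?, subtree?] at hx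
  | node a l r, b :: w, x, h, hx => by
      rw [nodeLabel?_node_cons] at hx
      exact (le_label_of_nodeLabel? (h.of_node b) hx).trans
        (h.label_child_lt b).le

theorem exists_nodeLabel?_of_prefix : ∀ {T : CMT} {u w : List Bool} {x : ℝ}, u <+: w →
    T.nodeLabel? w = some x → ∃ y, T.nodeLabel? u = some y
  | T, [], _, _, _, _ => ⟨T.label, nodeLabel?_nil T⟩
  | leaf _, _ :: _, _, _, ⟨_, rfl⟩, hx => by simp [nodeLabel?, subtree?] at hx
  | node _ l r, b :: u, _, _, ⟨v, rfl⟩, hx => by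
      rw [List.cons_append, nodeLabel?_node_cons] at hx
      rw [nodeLabel?_node_cons]
      exact exists_nodeLabel?_of_prefix (List.prefix_append u v) hx

theorem memS_nil {T : CMT} {t : ℝ} : T.MemS t [] ↔ T.label ≤ t := by
  simp [MemS, nodeLabel?_nil]

theorem not_memS_leaf_cons {a t : ℝ} {b : Bool} {w : List Bool} :
    ¬ (leaf a).MemS t (b :: w) := by
  simp [MemS, nodeLabel?, subtree?]

theorem memS_node_cons {a t : ℝ} {l r : CMT} (h : (node a l r).LocalValid) {b : Bool}
    {w : List Bool} : (node a l r).MemS t (b :: w) ↔ t < a ∧ (child l r b).MemS t w := by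
  cases w with
  | nil =>
    simp only [MemS, List.dropLast_singleton, nodeLabel?_node_cons, nodeLabel?_nil]
    simp [and_comm, label]
  | cons c w =>
    have hd : (b :: c :: w).dropLast = b :: (c :: w).dropLast :=
      List.dropLast_cons_of_ne_nil (List.cons_ne_nil c w)
    simp only [MemS, hd, nodeLabel?_node_cons, ne_eq, reduceCtorEq, not_false_eq_true,
      forall_const]
    refine ⟨fun ⟨⟨x, hx, hxt⟩, hpar⟩ => ⟨?_, ⟨x, hx, hxt⟩, hpar⟩,
      fun ⟨_, h1, h2⟩ => ⟨h1, h2⟩⟩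
    obtain ⟨y, hy⟩ := exists_nodeLabel?_of_prefix (List.dropLast_prefix _) hx
    exact (hpar y hy).trans_le (le_label_of_nodeLabel? (h.of_node b) hy) |>.trans
      (h.label_child_lt b)

theorem label_subAt_le_of_memS : ∀ {T : CMT} {t : ℝ} {w : List Bool}, T.LocalValid →
    T.MemS t w → (T.subAt w).label ≤ t
  | T, t, [], _, hw => by rwa [subAt_nil, ← memS_nil]
  | leaf _, _, _ :: _, _, hw => absurd hw not_memS_leaf_cons
  | node a l r, t, b :: w, h, hw => by
      rw [subAt_node_cons]
      exact label_subAt_le_of_memS (h.of_node b)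
        ((memS_node_cons h).1 hw).2

/-- The address of the node of `S_T(t)` below which the leaf `m` lies (for `m ≤ t`). -/
noncomputable def addrAt : CMT → ℝ → ℝ → List Bool
  | leaf _, _, _ => []
  | node a l r, t, m =>
      if a ≤ t then []
      else if m ∈ l.leafLabels then false :: addrAt l t m else true :: addrAt r t m

theorem addrAt_node {a t m : ℝ} {l r : CMT} (h : (node a l r).Valid) {b : Bool}
    (hm : m ∈ (child l r b).leafLabels) :
    (node a l r).addrAt t m = if a ≤ t then [] else b :: (child l r b).addrAt t m := by
  cases b
  · exact congrArg (ite _ _) (if_pos hm)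
  · exact congrArg (ite _ _) (if_neg (h.not_mem_child_not (b := true) hm))

theorem memS_addrAt {T : CMT} (hT : T.Valid) {m t : ℝ} (hm : m ∈ T.leafLabels) (hmt : m ≤ t) :
    T.MemS t (T.addrAt t m) := by
  induction T using child_induction with
  | leaf a => exact memS_nil.2 (hm ▸ hmt)
  | node a l r ih =>
    obtain ⟨b, hb⟩ := exists_mem_child hm
    rw [addrAt_node hT hb]
    split_ifs with ha
    · exact memS_nil.2 ha
    · exact (memS_node_cons hT.2).2 ⟨not_le.1 ha, ih b (hT.of_node b) hb⟩

theorem eq_addrAt_of_memS {T : CMT} (hT : T.Valid) {m t : ℝ} {u : List Bool}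
    (hu : T.MemS t u) (hm : m ∈ (T.subAt u).leafLabels) : u = T.addrAt t m := by
  induction T using child_induction generalizing u with
  | leaf a =>
    cases u with
    | nil => rfl
    | cons b u => exact absurd hu not_memS_leaf_cons
  | node a l r ih =>
    cases u with
    | nil => exact (if_pos (memS_nil.1 hu)).symm
    | cons b u =>
      rw [subAt_node_cons] at hm
      obtain ⟨hta, hu⟩ := (memS_node_cons hT.2).1 hu
      rw [addrAt_node hT (leafLabels_subAt_subset _ u hm), if_neg (not_le.2 hta),
        ih b (hT.of_node b) hu hm]

theorem minLeaf_subAt_addrAt_eq_iff {T : CMT} (hT : T.Valid) {m t : ℝ}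
    (hm : m ∈ T.leafLabels) (hmt : m ≤ t) :
    (T.subAt (T.addrAt t m)).minLeaf = m ↔ t ∈ T.leafBar m := by
  induction T using child_induction with
  | leaf a => exact iff_of_true hm.symm (hm ▸ hmt)
  | node a l r ih =>
    obtain ⟨b, hb⟩ := exists_mem_child hm
    rw [addrAt_node hT hb]
    split_ifs with ha
    · rw [subAt_nil]
      by_cases hmin : m = (node a l r).minLeaf
      · subst hmin
        rw [leafBar_minLeaf hT]
        exact iff_of_true rfl hmt
      · exact iff_of_false (Ne.symm hmin)
          fun ht => (leafBar_subset_Iio_label hT hm hmin ht).not_ge ha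
    · rw [subAt_node_cons, ih b (hT.of_node b) hb, leafBar_node hT hb]
      split_ifs with hc
      · rw [hc.1, leafBar_minLeaf (hT.of_node b)]
        exact iff_of_true (hc.1 ▸ hmt) ⟨hc.1 ▸ hmt, not_le.1 ha⟩
      · rfl

theorem mem_leafBar_minLeaf_subAt {T : CMT} (hT : T.Valid) {t : ℝ} {w : List Bool}
    (hw : T.MemS t w) : t ∈ T.leafBar (T.subAt w).minLeaf := by
  have hmt : (T.subAt w).minLeaf ≤ t :=
    (minLeaf_le_label (hT.2.subAt w)).trans (label_subAt_le_of_memS hT.2 hw)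
  rw [← minLeaf_subAt_addrAt_eq_iff hT (minLeaf_subAt_mem T w) hmt,
    ← eq_addrAt_of_memS hT hw (minLeaf_mem _)]

/-- The elders of the leaf `m`: `m`, then the leaf whose bar absorbs the bar of `m`, and so on
down to `T.minLeaf`. -/
noncomputable def elders : CMT → ℝ → List ℝ
  | leaf a, _ => [a]
  | node _ l r, m =>
      if m ∈ l.leafLabels then l.elders m ++ (if r.minLeaf < l.minLeaf then [r.minLeaf] else [])
      else r.elders m ++ (if l.minLeaf < r.minLeaf then [l.minLeaf] else [])

theorem elders_node {a m : ℝ} {l r : CMT} (h : (node a l r).Valid) {b : Bool}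
    (hm : m ∈ (child l r b).leafLabels) :
    (node a l r).elders m = (child l r b).elders m ++
      if (child l r !b).minLeaf < (child l r b).minLeaf then [(child l r !b).minLeaf] else [] := by
  cases b
  · exact if_pos hm
  · exact if_neg (h.not_mem_child_not (b := true) hm)

theorem head?_elders {T : CMT} (hT : T.Valid) {m : ℝ} (hm : m ∈ T.leafLabels) :
    (T.elders m).head? = some m := by
  induction T using child_induction with
  | leaf a => exact congrArg some hm.symm
  | node a l r ih =>
    obtain ⟨b, hb⟩ := exists_mem_child hm
    rw [elders_node hT hb, List.head?_append, ih b (hT.of_node b) hb, Option.some_or]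

theorem mem_elders_self {T : CMT} (hT : T.Valid) {m : ℝ} (hm : m ∈ T.leafLabels) :
    m ∈ T.elders m :=
  List.mem_of_mem_head? (head?_elders hT hm)

theorem elders_minLeaf {T : CMT} (hT : T.Valid) : T.elders T.minLeaf = [T.minLeaf] := by
  induction T using child_induction with
  | leaf a => rfl
  | node a l r ih =>
    obtain ⟨b, hlt⟩ := hT.exists_minLeaf_lt
    rw [minLeaf_node_of_lt hlt, elders_node hT (minLeaf_mem _), if_neg hlt.not_gt,
      List.append_nil, ih b (hT.of_node b)]

theorem mem_elders {T : CMT} (hT : T.Valid) {m c : ℝ} (hm : m ∈ T.leafLabels)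
    (hc : c ∈ T.elders m) :
    c ∈ T.leafLabels ∧ c ≤ m := by
  induction T using child_induction generalizing m with
  | leaf a => exact ⟨List.mem_singleton.1 hc, (List.mem_singleton.1 hc).trans hm.symm |>.le⟩
  | node a l r ih =>
    obtain ⟨b, hb⟩ := exists_mem_child hm
    rw [elders_node hT hb, List.mem_append] at hc
    rcases hc with hc | hc
    · obtain ⟨hcL, hcm⟩ := ih b (hT.of_node b) hb hc
      exact ⟨mem_leafLabels_node hcL, hcm⟩
    · split_ifs at hc with hlt
      · rw [List.mem_singleton.1 hc]
        exact ⟨mem_leafLabels_node (minLeaf_mem _), hlt.le.trans (minLeaf_le hb)⟩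
      · exact absurd hc List.not_mem_nil

theorem elders_nodup {T : CMT} (hT : T.Valid) {m : ℝ} (hm : m ∈ T.leafLabels) :
    (T.elders m).Nodup := by
  induction T using child_induction generalizing m with
  | leaf a => exact List.nodup_singleton a
  | node a l r ih =>
    obtain ⟨b, hb⟩ := exists_mem_child hm
    rw [elders_node hT hb, List.nodup_append]
    refine ⟨ih b (hT.of_node b) hb, by split_ifs <;> simp, fun c hc c' hc' hcc' => ?_⟩
    split_ifs at hc' with hlt
    · rw [List.mem_singleton.1 hc'] at hcc'
      exact hT.not_mem_child_not ((mem_elders (hT.of_node b) hb hc).1) (hcc' ▸ minLeaf_mem _)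
    · exact absurd hc' List.not_mem_nil

theorem exists_elders_eq_cons {T : CMT} (hT : T.Valid) {m : ℝ} (hm : m ∈ T.leafLabels)
    (hne : m ≠ T.minLeaf) : ∃ m' ∈ T.leafLabels, T.elders m = m :: T.elders m' := by
  induction T using child_induction generalizing m with
  | leaf a => exact absurd hm hne
  | node a l r ih =>
    obtain ⟨b, hb⟩ := exists_mem_child hm
    by_cases hms : m = (child l r b).minLeaf
    · have hlt : (child l r !b).minLeaf < (child l r b).minLeaf := by
        refine (hT.minLeaf_child_ne b).symm.lt_of_le (not_lt.1 fun hlt => hne ?_)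
        rw [hms, minLeaf_node_of_lt hlt]
      refine ⟨(child l r !b).minLeaf, mem_leafLabels_node (minLeaf_mem _), ?_⟩
      have hy := elders_node hT (b := !b) (minLeaf_mem _)
      rw [Bool.not_not, if_neg hlt.not_gt, List.append_nil, elders_minLeaf (hT.of_node _)] at hy
      rw [elders_node hT hb, if_pos hlt, hy, hms, elders_minLeaf (hT.of_node b)]
      rfl
    · obtain ⟨m', hm', he⟩ := ih b (hT.of_node b) hb hms
      refine ⟨m', mem_leafLabels_node hm', ?_⟩
      rw [elders_node hT hb, elders_node hT hm', he]
      rfl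

theorem minLeaf_mem_elders {T : CMT} (hT : T.Valid) {m : ℝ} (hm : m ∈ T.leafLabels) :
    T.minLeaf ∈ T.elders m := by
  induction T using child_induction generalizing m with
  | leaf a => exact List.mem_singleton_self a
  | node a l r ih =>
    obtain ⟨b, hb⟩ := exists_mem_child hm
    rw [elders_node hT hb, List.mem_append]
    split_ifs with hlt
    · rw [minLeaf_node b, min_eq_right hlt.le]
      exact Or.inr (List.mem_singleton_self _)
    · rw [minLeaf_node b, min_eq_left (not_lt.1 hlt)]
      exact Or.inl (ih b (hT.of_node b) hb)

theorem mem_leafBar_of_mem_elders {T : CMT} (hT : T.Valid) {m c t : ℝ} (hm : m ∈ T.leafLabels)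
    (ht : t ∈ T.leafBar m) (hc : c ∈ T.elders m) : t ∈ T.leafBar c := by
  induction T using child_induction generalizing m with
  | leaf a => rwa [List.mem_singleton.1 hc]
  | node a l r ih =>
    obtain ⟨b, hb⟩ := exists_mem_child hm
    have hmt : m ≤ t := le_of_mem_leafBar hT (mem_leafLabels_node hb) ht
    rw [elders_node hT hb, List.mem_append] at hc
    rw [leafBar_node hT hb] at ht
    rcases hc with hc | hc
    · have hcL := (mem_elders (hT.of_node b) hb hc).1
      by_cases hcm : m = (child l r b).minLeaf ∧ (child l r !b).minLeaf < (child l r b).minLeaf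
      · rw [hcm.1, elders_minLeaf (hT.of_node b), ← hcm.1, List.mem_singleton] at hc
        rwa [hc, leafBar_node hT hb]
      · rw [if_neg hcm] at ht
        have htc := ih b (hT.of_node b) hb ht hc
        rw [leafBar_node hT hcL]
        split_ifs with hcc
        · have hne : m ≠ (child l r b).minLeaf := fun he => hcm ⟨he, hcc.2⟩
          exact ⟨le_of_mem_leafBar (hT.of_node b) hcL htc,
            (leafBar_subset_Iio_label (hT.of_node b) hb hne ht).trans
              (hT.2.label_child_lt b)⟩
        · exact htc
    · split_ifs at hc with hlt
      · rw [List.mem_singleton.1 hc, leafBar_node_of_not_lt (b := !b) hT (minLeaf_mem _)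
          (by simpa using hlt.not_gt), leafBar_minLeaf (hT.of_node _)]
        exact hlt.le.trans ((minLeaf_le hb).trans hmt)
      · exact absurd hc List.not_mem_nil

theorem elders_minLeaf_subAt_addrAt_subset {T : CMT} (hT : T.Valid) {m t : ℝ}
    (hm : m ∈ T.leafLabels) :
    T.elders (T.subAt (T.addrAt t m)).minLeaf ⊆ T.elders m := by
  induction T using child_induction generalizing m with
  | leaf a => exact List.Subset.refl _
  | node a l r ih =>
    obtain ⟨b, hb⟩ := exists_mem_child hm
    rw [addrAt_node hT hb]
    split_ifs with ha
    · rw [subAt_nil, elders_minLeaf hT]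
      exact List.cons_subset.2 ⟨minLeaf_mem_elders hT hm, List.nil_subset _⟩
    · rw [subAt_node_cons, elders_node hT (minLeaf_subAt_mem _ _), elders_node hT hb]
      exact List.append_subset.2
        ⟨List.Subset.trans (ih b (hT.of_node b) hb) (List.subset_append_left _ _),
          List.subset_append_right _ _⟩

theorem not_mem_leafBar_of_mem_elders {T : CMT} (hT : T.Valid) {m c t : ℝ}
    (hm : m ∈ T.leafLabels) (hc : c ∈ T.elders m)
    (hc' : c ∉ T.elders (T.subAt (T.addrAt t m)).minLeaf) :
    t ∉ T.leafBar c := by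
  induction T using child_induction generalizing m with
  | leaf a => exact absurd hc hc'
  | node a l r ih =>
    obtain ⟨b, hb⟩ := exists_mem_child hm
    rw [addrAt_node hT hb] at hc'
    split_ifs at hc' with ha
    · rw [subAt_nil, elders_minLeaf hT, List.mem_singleton] at hc'
      exact fun ht => (leafBar_subset_Iio_label hT (mem_elders hT hm hc).1 hc' ht).not_ge ha
    · rw [subAt_node_cons, elders_node hT (minLeaf_subAt_mem _ _), List.mem_append,
        not_or] at hc'
      rw [elders_node hT hb, List.mem_append] at hc
      have hcs : c ∈ (child l r b).elders m := hc.resolve_right hc'.2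
      have hdead := ih b (hT.of_node b) hb hcs hc'.1
      rw [leafBar_node hT (mem_elders (hT.of_node b) hb hcs).1]
      split_ifs with hcm
      · rw [hcm.1, leafBar_minLeaf (hT.of_node b), ← hcm.1] at hdead
        exact fun ht => hdead ht.1
      · exact hdead

theorem mem_elders_minLeaf_subAt_addrAt_iff {T : CMT} (hT : T.Valid) {m r t c : ℝ}
    (hm : m ∈ T.leafLabels) (hr : r ∈ T.leafBar m) (ht : t ∈ T.leafBar c) :
    c ∈ T.elders (T.subAt (T.addrAt t m)).minLeaf ↔ r ∈ T.leafBar c ∧ c ∈ T.elders m := by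
  refine ⟨fun hc => ?_, fun ⟨_, hc⟩ => ?_⟩
  · have hc' := elders_minLeaf_subAt_addrAt_subset hT hm hc
    exact ⟨mem_leafBar_of_mem_elders hT hm hr hc', hc'⟩
  · by_contra hc'
    exact not_mem_leafBar_of_mem_elders hT hm hc hc' ht

abbrev FreeAt (k : Type) [Field k] (T : CMT) (t : ℝ) : Type :=
  {w : List Bool // T.MemS t w} →₀ k

abbrev BarcodeAt (k : Type) [Field k] (T : CMT) (t : ℝ) : Type :=
  ⨁ I : T.Elder, (PLift (t ∈ (I : Set ℝ)) → k)

section Linear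

variable (k : Type) [Field k]

noncomputable def componentVec (T : CMT) (t m : ℝ) : FreeAt k T t :=
  if h : T.MemS t (T.addrAt t m) then Finsupp.single ⟨_, h⟩ 1 else 0

noncomputable def barGen (T : CMT) (t : ℝ) (I : T.Elder) : BarcodeAt k T t :=
  DirectSum.lof k T.Elder (fun J => PLift (t ∈ (J : Set ℝ)) → k) I fun _ => 1

/-- `T.leafBar c` as an index of the barcode; for a non-leaf `c`, the bar of `T.minLeaf`. -/
noncomputable def barOf {T : CMT} (hT : T.Valid) (c : ℝ) : T.Elder :=
  ⟨T.leafBar (if c ∈ T.leafLabels then c else T.minLeaf), by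
    rw [elder_eq_image hT]
    refine Set.mem_image_of_mem _ ?_
    split_ifs with hc
    exacts [hc, minLeaf_mem T]⟩

noncomputable def elderSum {T : CMT} (hT : T.Valid) (t m : ℝ) : BarcodeAt k T t :=
  ((T.elders m).map fun c => barGen k T t (barOf hT c)).sum

noncomputable def toBarcode {T : CMT} (hT : T.Valid) (t : ℝ) :
    FreeAt k T t →ₗ[k] BarcodeAt k T t :=
  Finsupp.linearCombination k fun w => elderSum k hT t (T.subAt w.1).minLeaf

noncomputable def barLift (T : CMT) (t c : ℝ) : FreeAt k T t :=
  match (T.elders c).tail with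
  | [] => componentVec k T t c
  | c' :: _ => componentVec k T t c - componentVec k T t c'

noncomputable def ofBarcode (T : CMT) (t : ℝ) : BarcodeAt k T t →ₗ[k] FreeAt k T t :=
  DirectSum.toModule k T.Elder _ fun I =>
    if h : t ∈ (I : Set ℝ) then (LinearMap.proj ⟨h⟩).smulRight (barLift k T t (sInf I))
    else 0

theorem coe_barOf {T : CMT} (hT : T.Valid) {c : ℝ} (hc : c ∈ T.leafLabels) :
    (barOf hT c : Set ℝ) = T.leafBar c := by
  rw [barOf, Subtype.coe_mk, if_pos hc]

theorem sInf_barOf {T : CMT} (hT : T.Valid) {c : ℝ} (hc : c ∈ T.leafLabels) :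
    sInf (barOf hT c : Set ℝ) = c := by
  rw [coe_barOf hT hc, sInf_leafBar hT hc]

theorem exists_barOf_eq {T : CMT} (hT : T.Valid) (I : T.Elder) :
    ∃ c ∈ T.leafLabels, barOf hT c = I := by
  obtain ⟨c, hc, hI⟩ : (I : Set ℝ) ∈ T.leafBar '' T.leafLabels := elder_eq_image hT ▸ I.2
  exact ⟨c, hc, Subtype.ext (by rw [coe_barOf hT hc, hI])⟩

theorem barOf_eq_iff {T : CMT} (hT : T.Valid) {c : ℝ} (hc : c ∈ T.leafLabels) (I : T.Elder) :
    barOf hT c = I ↔ c = sInf (I : Set ℝ) := by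
  obtain ⟨c', hc', rfl⟩ := exists_barOf_eq hT I
  rw [coe_barOf hT hc', sInf_leafBar hT hc']
  refine ⟨fun he => ?_, fun he => he ▸ rfl⟩
  rw [← sInf_leafBar hT hc, ← coe_barOf hT hc, he, coe_barOf hT hc', sInf_leafBar hT hc']

theorem componentVec_eq {T : CMT} (hT : T.Valid) {t m : ℝ} (hm : m ∈ T.leafLabels)
    (hmt : m ≤ t) :
    componentVec k T t m = Finsupp.single ⟨T.addrAt t m, memS_addrAt hT hm hmt⟩ 1 :=
  dif_pos _

theorem component_barGen_barOf {T : CMT} (hT : T.Valid) (t : ℝ) {c : ℝ}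
    (hc : c ∈ T.leafLabels) (I : T.Elder) :
    DirectSum.component k T.Elder (fun J => PLift (t ∈ (J : Set ℝ)) → k) I
        (barGen k T t (barOf hT c)) =
      if sInf (I : Set ℝ) = c then (fun _ => 1 : PLift (t ∈ (I : Set ℝ)) → k) else 0 := by
  rw [barGen, DirectSum.component.of]
  by_cases h : barOf hT c = I
  · subst h
    rw [dif_pos rfl, if_pos (sInf_barOf hT hc)]
  · rw [dif_neg h, if_neg fun h' => h ((barOf_eq_iff hT hc I).2 h'.symm)]

theorem component_elderSum {T : CMT} (hT : T.Valid) (t : ℝ) {m : ℝ} (hm : m ∈ T.leafLabels)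
    (I : T.Elder) :
    DirectSum.component k T.Elder (fun J => PLift (t ∈ (J : Set ℝ)) → k) I
        (elderSum k hT t m) =
      if sInf (I : Set ℝ) ∈ T.elders m then (fun _ => 1 : PLift (t ∈ (I : Set ℝ)) → k)
      else 0 := by
  rw [elderSum, map_list_sum, List.map_map, ← List.sum_toFinset _ (elders_nodup hT hm)]
  simp only [Function.comp_apply]
  rw [Finset.sum_congr rfl fun c hc =>
    component_barGen_barOf k hT t (mem_elders hT hm (List.mem_toFinset.1 hc)).1 I,
    Finset.sum_ite_eq]
  exact if_congr List.mem_toFinset rfl rfl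

theorem toBarcode_single {T : CMT} (hT : T.Valid) {t : ℝ} (w : {w : List Bool // T.MemS t w}) :
    toBarcode k hT t (Finsupp.single w 1) = elderSum k hT t (T.subAt w.1).minLeaf := by
  rw [toBarcode, Finsupp.linearCombination_single, one_smul]

theorem toBarcode_componentVec {T : CMT} (hT : T.Valid) {t c : ℝ} (hc : c ∈ T.leafLabels)
    (ht : t ∈ T.leafBar c) : toBarcode k hT t (componentVec k T t c) = elderSum k hT t c := by
  have hct := le_of_mem_leafBar hT hc ht
  rw [componentVec_eq k hT hc hct, toBarcode_single,
    (minLeaf_subAt_addrAt_eq_iff hT hc hct).2 ht]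

theorem barLift_minLeaf {T : CMT} (hT : T.Valid) (t : ℝ) :
    barLift k T t T.minLeaf = componentVec k T t T.minLeaf := by
  rw [barLift, elders_minLeaf hT, List.tail_cons]

theorem exists_barLift_eq_sub {T : CMT} (hT : T.Valid) (t : ℝ) {c : ℝ} (hc : c ∈ T.leafLabels)
    (hne : c ≠ T.minLeaf) : ∃ c' ∈ T.leafLabels, T.elders c = c :: T.elders c' ∧
      barLift k T t c = componentVec k T t c - componentVec k T t c' := by
  obtain ⟨c', hc', he⟩ := exists_elders_eq_cons hT hc hne
  obtain ⟨tl, he'⟩ := List.head?_eq_some_iff.1 (head?_elders hT hc')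
  exact ⟨c', hc', he, by rw [barLift, he, List.tail_cons, he']⟩

theorem toBarcode_barLift {T : CMT} (hT : T.Valid) {t c : ℝ} (hc : c ∈ T.leafLabels)
    (ht : t ∈ T.leafBar c) : toBarcode k hT t (barLift k T t c) = barGen k T t (barOf hT c) := by
  by_cases hmin : c = T.minLeaf
  · subst hmin
    rw [barLift_minLeaf k hT, toBarcode_componentVec k hT hc ht, elderSum, elders_minLeaf hT,
      List.map_singleton, List.sum_singleton]
  · obtain ⟨c', hc', he, hlift⟩ := exists_barLift_eq_sub k hT t hc hmin
    have ht' : t ∈ T.leafBar c' :=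
      mem_leafBar_of_mem_elders hT hc ht (he ▸ List.mem_cons_of_mem _ (mem_elders_self hT hc'))
    rw [hlift, map_sub, toBarcode_componentVec k hT hc ht, toBarcode_componentVec k hT hc' ht',
      elderSum, he, List.map_cons, List.sum_cons, ← elderSum, add_sub_cancel_right]

theorem sum_barLift_elders {T : CMT} (hT : T.Valid) {t m : ℝ} (hm : m ∈ T.leafLabels)
    (ht : t ∈ T.leafBar m) :
    ((T.elders m).map (barLift k T t)).sum = componentVec k T t m := by
  by_cases hmin : m = T.minLeaf
  · subst hmin
    rw [elders_minLeaf hT, List.map_singleton, List.sum_singleton, barLift_minLeaf k hT]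
  · obtain ⟨m', hm', he, hlift⟩ := exists_barLift_eq_sub k hT t hm hmin
    have ht' : t ∈ T.leafBar m' :=
      mem_leafBar_of_mem_elders hT hm ht (he ▸ List.mem_cons_of_mem _ (mem_elders_self hT hm'))
    rw [he, List.map_cons, List.sum_cons, sum_barLift_elders hT hm' ht', hlift, sub_add_cancel]
termination_by (T.elders m).length
decreasing_by rw [he]; exact Nat.lt_succ_self _

theorem toBarcode_comp_ofBarcode {T : CMT} (hT : T.Valid) (t : ℝ) :
    toBarcode k hT t ∘ₗ ofBarcode k T t = LinearMap.id := by
  refine DirectSum.linearMap_ext k fun I => LinearMap.ext fun x => ?_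
  obtain ⟨c, hc, rfl⟩ := exists_barOf_eq hT I
  simp only [LinearMap.comp_apply, ofBarcode, DirectSum.toModule_lof, LinearMap.id_apply]
  by_cases ht : t ∈ (barOf hT c : Set ℝ)
  · rw [dif_pos ht, LinearMap.smulRight_apply, map_smul, sInf_barOf hT hc,
      toBarcode_barLift k hT hc (coe_barOf hT hc ▸ ht), barGen, ← map_smul]
    congr 1
    funext p
    exact mul_one _
  · have : IsEmpty (PLift (t ∈ (barOf hT c : Set ℝ))) := ⟨fun p => ht p.down⟩
    rw [Subsingleton.elim x 0, map_zero, map_zero, map_zero]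

theorem ofBarcode_barGen {T : CMT} (hT : T.Valid) {t c : ℝ} (hc : c ∈ T.leafLabels)
    (ht : t ∈ T.leafBar c) : ofBarcode k T t (barGen k T t (barOf hT c)) = barLift k T t c := by
  rw [ofBarcode, barGen, DirectSum.toModule_lof, dif_pos (coe_barOf hT hc ▸ ht),
    LinearMap.smulRight_apply, sInf_barOf hT hc]
  exact one_smul _ _

theorem ofBarcode_comp_toBarcode {T : CMT} (hT : T.Valid) (t : ℝ) :
    ofBarcode k T t ∘ₗ toBarcode k hT t = LinearMap.id := by
  refine Finsupp.basisSingleOne.ext fun w => ?_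
  have hm := minLeaf_subAt_mem T w.1
  have ht := mem_leafBar_minLeaf_subAt hT w.2
  simp only [Finsupp.coe_basisSingleOne, LinearMap.comp_apply, LinearMap.id_apply]
  rw [toBarcode_single, elderSum, map_list_sum, List.map_map, Function.comp_def,
    List.map_congr_left fun c hc => ofBarcode_barGen k hT (mem_elders hT hm hc).1
      (mem_leafBar_of_mem_elders hT hm ht hc),
    sum_barLift_elders k hT hm ht, componentVec_eq k hT hm (le_of_mem_leafBar hT hm ht)]
  congr 1
  exact Subtype.ext (eq_addrAt_of_memS hT w.2 (minLeaf_mem _)).symm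

noncomputable def elderEquiv {T : CMT} (hT : T.Valid) (t : ℝ) :
    FreeAt k T t ≃ₗ[k] BarcodeAt k T t :=
  LinearEquiv.ofLinearMap (toBarcode k hT t) (ofBarcode k T t) (toBarcode_comp_ofBarcode k hT t)
    (ofBarcode_comp_toBarcode k hT t)

theorem intervalShift_apply (I : Set ℝ) (r t : ℝ) (x : PLift (r ∈ I) → k)
    (p : PLift (t ∈ I)) :
    intervalShift k I r t x p = if hr : r ∈ I then x ⟨hr⟩ else 0 :=
  rfl

theorem component_toBarcode_single_of_prefix {T : CMT} (hT : T.Valid) {r t : ℝ}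
    {v : {w : List Bool // T.MemS r w}} {u : {w : List Bool // T.MemS t w}} (huv : u.1 <+: v.1)
    (I : T.Elder) :
    DirectSum.component k T.Elder (fun J => PLift (t ∈ (J : Set ℝ)) → k) I
        (toBarcode k hT t (Finsupp.single u 1)) =
      intervalShift k I r t
        (DirectSum.component k T.Elder (fun J => PLift (r ∈ (J : Set ℝ)) → k) I
          (toBarcode k hT r (Finsupp.single v 1))) := by
  obtain ⟨c, hc, rfl⟩ := exists_barOf_eq hT I
  obtain ⟨x, hx⟩ := huv
  have hm := minLeaf_subAt_mem T v.1
  have hr := mem_leafBar_minLeaf_subAt hT v.2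
  have hu : u.1 = T.addrAt t (T.subAt v.1).minLeaf := by
    refine eq_addrAt_of_memS hT u.2 ?_
    rw [← hx, subAt_append]
    exact minLeaf_subAt_mem _ _
  rw [toBarcode_single, toBarcode_single, hu, component_elderSum k hT _ hm,
    component_elderSum k hT _ (minLeaf_subAt_mem _ _), sInf_barOf hT hc]
  funext p
  have ht : t ∈ T.leafBar c := coe_barOf hT hc ▸ p.down
  simp only [intervalShift_apply, mem_elders_minLeaf_subAt_addrAt_iff hT hm hr ht,
    coe_barOf hT hc]
  split_ifs <;> simp_all

theorem component_toBarcode_mapDomain {T : CMT} (hT : T.Valid) {r t : ℝ}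
    {σ : {w : List Bool // T.MemS r w} → {w : List Bool // T.MemS t w}}
    (hσ : ∀ v, (σ v).1 <+: v.1) (x : FreeAt k T r) (I : T.Elder) :
    DirectSum.component k T.Elder (fun J => PLift (t ∈ (J : Set ℝ)) → k) I
        (toBarcode k hT t (Finsupp.mapDomain σ x)) =
      intervalShift k I r t
        (DirectSum.component k T.Elder (fun J => PLift (r ∈ (J : Set ℝ)) → k) I
          (toBarcode k hT r x)) := by
  suffices h : DirectSum.component k T.Elder _ I ∘ₗ toBarcode k hT t ∘ₗ
      Finsupp.lmapDomain k k σ =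
        intervalShift k I r t ∘ₗ DirectSum.component k T.Elder _ I ∘ₗ toBarcode k hT r from
    LinearMap.congr_fun h x
  refine Finsupp.basisSingleOne.ext fun w => ?_
  simpa [Finsupp.mapDomain_single] using component_toBarcode_single_of_prefix k hT (hσ w) I

end Linear

end CMT

/-- the Elder Rule: for a valid chiral merge tree `T`, the
persistent vector space freely generated by the persistent set `S_T` is naturally
isomorphic to the direct sum of the interval modules of the bars of `Elder T`.
Here `σ` is the shift map of `S_T`, sending each node to its unique ancestor
(prefix address) in `S_T(t)`. -/
theorem elder_rule (k : Type) [Field k] (T : CMT) (hT : T.Valid)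
    (σ : ∀ r t : ℝ, r ≤ t → {w : List Bool // T.MemS r w} → {w : List Bool // T.MemS t w})
    (hσ : ∀ (r t : ℝ) (h : r ≤ t) (v : {w : List Bool // T.MemS r w}),
      (σ r t h v).1 <+: v.1) :
    ∃ e : (t : ℝ) → ({w : List Bool // T.MemS t w} →₀ k) ≃ₗ[k]
        (⨁ I : T.Elder, (PLift (t ∈ (I : Set ℝ)) → k)),
      ∀ (r t : ℝ) (h : r ≤ t) (x : {w : List Bool // T.MemS r w} →₀ k) (I : T.Elder),
        (e t (Finsupp.mapDomain (σ r t h) x)) I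
          = intervalShift k (I : Set ℝ) r t ((e r x) I) :=
  ⟨CMT.elderEquiv k hT, fun r t h x I => CMT.component_toBarcode_mapDomain k hT (hσ r t h) x I⟩
end

section
/- Let T be a valid chiral merge tree and let r ≤ t be real numbers. Then the cardinality of S_T(t) equals the number of intervals I ∈ Elder(T) with t ∈ I, and the cardinality of the image of the shift map σ_{tr} : S_T(r) → S_T(t) equals the number of intervals I ∈ Elder(T) containing both r and t. -/
open scoped Classical

/-!
The image of `σ_{tr}` consists of the nodes of `S_T(t)` whose subtree has a leaf of label `≤ r`,
and `S_T(t)` itself is the case `r = t`. These nodes are counted by recursion on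
`T = node a T₁ T₂`. If `a ≤ t`, only the root can qualify, and only the unbounded bar
`[minLeaf T, ∞)` can contain `t`: both counts are `1` or `0` according as `minLeaf T ≤ r`.
If `t < a`, the nodes split over `T₁` and `T₂`, and so do the bars: `Elder T` arises from the
disjoint union `Elder T₁ ∪ Elder T₂` by swapping `[m, ∞)` for `[m, a)`, two bars that contain
both `r` and `t` under the same condition `m ≤ r`.
-/

theorem Set.encard_sep_insert_sdiff_singleton {α : Type*} {S : Set α} {x y : α} {p : α → Prop}
    (hy : y ∈ S) (hx : x ∉ S) (hp : p x ↔ p y) :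
    {z ∈ insert x (S \ {y}) | p z}.encard = {z ∈ S | p z}.encard := by
  by_cases hpy : p y
  · have : {z ∈ insert x (S \ {y}) | p z} = insert x ({z ∈ S | p z} \ {y}) := by
      ext z
      simp only [Set.mem_insert_iff, Set.mem_sdiff, Set.mem_singleton_iff, Set.mem_ofPred_eq]
      grind
    rw [this, Set.encard_insert_of_notMem (fun h => hx h.1.1),
      Set.encard_sdiff_singleton_add_one (show y ∈ {z ∈ S | p z} from ⟨hy, hpy⟩)]
  · congr 1
    ext z
    simp only [Set.mem_insert_iff, Set.mem_sdiff, Set.mem_singleton_iff, Set.mem_ofPred_eq]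
    grind

theorem Set.encard_image_cons_union_image_cons {α : Type*} {a b : α} (hab : a ≠ b)
    (A B : Set (List α)) :
    (List.cons a '' A ∪ List.cons b '' B).encard = A.encard + B.encard := by
  rw [Set.encard_union_eq, List.cons_injective.encard_image, List.cons_injective.encard_image]
  refine Set.disjoint_left.2 ?_
  rintro _ ⟨u, -, rfl⟩ ⟨v, -, h⟩
  exact hab (List.cons.inj h).1.symm

namespace CMT

variable {T l r s : CMT} {a t r' : ℝ} {u v w : List Bool} {I : Set ℝ}

@[simp]
theorem subtree?_nil (T : CMT) : T.subtree? [] = some T := by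
  cases T <;> rfl

theorem subtree?_append (T : CMT) (u q : List Bool) :
    T.subtree? (u ++ q) = (T.subtree? u).bind (·.subtree? q) := by
  induction u generalizing T with
  | nil => simp
  | cons b u ih => cases T with
    | leaf => rfl
    | node a l r => cases b <;> exact ih _

theorem exists_subtree?_of_prefix (h : u <+: w) (hw : T.subtree? w = some s) :
    ∃ s', T.subtree? u = some s' := by
  obtain ⟨q, rfl⟩ := h
  rw [subtree?_append] at hw
  cases hu : T.subtree? u with
  | none => simp [hu] at hw
  | some s' => exact ⟨s', rfl⟩

theorem minLeaf_le_of_subtree? (h : T.subtree? w = some s) : T.minLeaf ≤ s.minLeaf := by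
  induction w generalizing T with
  | nil => cases (subtree?_nil T).symm.trans h; rfl
  | cons b w ih => cases T with
    | leaf => cases h
    | node a l r => cases b with
      | false => exact (min_le_left _ _).trans (ih h)
      | true => exact (min_le_right _ _).trans (ih h)

theorem exists_subtree?_label_eq_minLeaf (T : CMT) :
    ∃ q s, T.subtree? q = some s ∧ s.label = T.minLeaf := by
  induction T with
  | leaf a => exact ⟨[], leaf a, rfl, rfl⟩
  | node a l r ihl ihr =>
    obtain ⟨ql, sl, hql, hsl⟩ := ihl
    obtain ⟨qr, sr, hqr, hsr⟩ := ihr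
    rcases le_total l.minLeaf r.minLeaf with h | h
    · exact ⟨false :: ql, sl, hql, hsl.trans (min_eq_left h).symm⟩
    · exact ⟨true :: qr, sr, hqr, hsr.trans (min_eq_right h).symm⟩

theorem minLeaf_mem_labelList (T : CMT) : T.minLeaf ∈ T.labelList := by
  induction T with
  | leaf a => exact List.mem_singleton_self a
  | node a l r ihl ihr =>
    rcases le_total l.minLeaf r.minLeaf with h | h
    · simp [minLeaf, min_eq_left h, labelList, ihl]
    · simp [minLeaf, min_eq_right h, labelList, ihr]

namespace LocalValid

theorem left (hT : (node a l r).LocalValid) : l.LocalValid := hT.2.2.1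

theorem right (hT : (node a l r).LocalValid) : r.LocalValid := hT.2.2.2

theorem minLeaf_le_label (hT : T.LocalValid) : T.minLeaf ≤ T.label := by
  induction T with
  | leaf a => rfl
  | node a l r ihl _ => exact ((min_le_left _ _).trans (ihl hT.left)).trans hT.1.le

theorem of_subtree? (hT : T.LocalValid) (h : T.subtree? w = some s) : s.LocalValid := by
  induction w generalizing T with
  | nil => cases (subtree?_nil T).symm.trans h; exact hT
  | cons b w ih => cases T with
    | leaf => cases h
    | node a l r => cases b with
      | false => exact ih hT.left h
      | true => exact ih hT.right h

theorem label_le_of_subtree? (hT : T.LocalValid) (h : T.subtree? w = some s) :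
    s.label ≤ T.label := by
  induction w generalizing T with
  | nil => cases (subtree?_nil T).symm.trans h; rfl
  | cons b w ih => cases T with
    | leaf => cases h
    | node a l r => cases b with
      | false => exact (ih hT.left h).trans hT.1.le
      | true => exact (ih hT.right h).trans hT.2.1.le

theorem label_le_of_prefix (hT : T.LocalValid) (h : u <+: w) {su sw : CMT}
    (hu : T.subtree? u = some su) (hw : T.subtree? w = some sw) : sw.label ≤ su.label := by
  obtain ⟨q, rfl⟩ := h
  rw [subtree?_append, hu, Option.bind_some] at hw
  exact (hT.of_subtree? hu).label_le_of_subtree? hw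

end LocalValid

theorem exists_subtree?_of_memS (h : T.MemS t w) : ∃ s, T.subtree? w = some s ∧ s.label ≤ t := by
  obtain ⟨⟨b, hb, hbt⟩, -⟩ := h
  obtain ⟨s, hs, rfl⟩ := Option.map_eq_some_iff.1 hb
  exact ⟨s, hs, hbt⟩

theorem memS_nil_iff : T.MemS t [] ↔ T.label ≤ t := by
  simp [MemS, nodeLabel?]

theorem memS_leaf_iff : (leaf a).MemS t w ↔ w = [] ∧ a ≤ t := by
  cases w with
  | nil => simp [memS_nil_iff, label]
  | cons b w => simp [MemS, nodeLabel?, subtree?]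

theorem memS_node_false_cons (ht : t < a) : (node a l r).MemS t (false :: u) ↔ l.MemS t u := by
  cases u with
  | nil => simp [MemS, nodeLabel?, subtree?, label, ht]
  | cons b u => simp [MemS, nodeLabel?, subtree?]

theorem memS_node_true_cons (ht : t < a) : (node a l r).MemS t (true :: u) ↔ r.MemS t u := by
  cases u with
  | nil => simp [MemS, nodeLabel?, subtree?, label, ht]
  | cons b u => simp [MemS, nodeLabel?, subtree?]

namespace LocalValid

theorem lt_label_of_memS (hT : T.LocalValid) (hw : T.MemS t w) (h : u <+: w) (hne : u ≠ w)
    (hu : T.subtree? u = some s) : t < s.label := by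
  obtain ⟨q, rfl⟩ := h
  have hq : q ≠ [] := by rintro rfl; exact hne (List.append_nil u).symm
  obtain ⟨sw, hsw, -⟩ := exists_subtree?_of_memS hw
  have hp : (u ++ q).dropLast = u ++ q.dropLast := List.dropLast_append_of_ne_nil hq
  obtain ⟨sp, hsp⟩ := exists_subtree?_of_prefix (List.dropLast_prefix _) hsw
  rw [hp] at hsp
  calc t < sp.label := hw.2 _ (by simp [hq]) (by rw [nodeLabel?, hp, hsp]; rfl)
    _ ≤ s.label := hT.label_le_of_prefix (List.prefix_append _ _) hu hsp

theorem eq_of_memS_of_prefix (hT : T.LocalValid) (hu : T.MemS t u) (hw : T.MemS t w)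
    (h : u <+: w) : u = w := by
  by_contra hne
  obtain ⟨su, hsu, hsut⟩ := exists_subtree?_of_memS hu
  exact (hT.lt_label_of_memS hw h hne hsu).not_ge hsut

theorem eq_nil_of_memS (hT : T.LocalValid) (ht : T.label ≤ t) (hw : T.MemS t w) : w = [] := by
  by_contra hne
  exact (hT.lt_label_of_memS hw List.nil_prefix (Ne.symm hne) (subtree?_nil T)).not_ge ht

end LocalValid

theorem exists_memS_prefix (hq : T.subtree? w = some s) (hs : s.label ≤ t) :
    ∃ v, T.MemS t v ∧ v <+: w := by
  induction T generalizing w with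
  | leaf a =>
    cases w with
    | nil => cases hq; exact ⟨[], memS_nil_iff.2 hs, List.prefix_refl _⟩
    | cons => cases hq
  | node a l r ihl ihr =>
    rcases le_or_gt a t with hat | hta
    · exact ⟨[], memS_nil_iff.2 hat, List.nil_prefix⟩
    cases w with
    | nil => cases hq; exact absurd hs hta.not_ge
    | cons b w => cases b with
      | false =>
        obtain ⟨v, hv, hvw⟩ := ihl hq
        exact ⟨false :: v, (memS_node_false_cons hta).2 hv, List.cons_prefix_cons.2 ⟨rfl, hvw⟩⟩
      | true =>
        obtain ⟨v, hv, hvw⟩ := ihr hq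
        exact ⟨true :: v, (memS_node_true_cons hta).2 hv, List.cons_prefix_cons.2 ⟨rfl, hvw⟩⟩

/-- For `r ≤ t`, the image of the shift map `σ_{tr}`. -/
def aliveSince (T : CMT) (r t : ℝ) : Set (List Bool) :=
  {w | T.MemS t w ∧ ∃ s, T.subtree? w = some s ∧ s.minLeaf ≤ r}

namespace LocalValid

theorem setOf_memS_eq_aliveSince (hT : T.LocalValid) : {w | T.MemS t w} = T.aliveSince t t := by
  ext w
  refine ⟨fun hw => ⟨hw, ?_⟩, fun hw => hw.1⟩
  obtain ⟨s, hs, hst⟩ := exists_subtree?_of_memS hw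
  exact ⟨s, hs, (hT.of_subtree? hs).minLeaf_le_label.trans hst⟩

theorem mem_aliveSince_of_prefix (hT : T.LocalValid) (hv : T.MemS r' v) (hw : T.MemS t w)
    (hwv : w <+: v) : w ∈ T.aliveSince r' t := by
  obtain ⟨sv, hsv, hsvr⟩ := exists_subtree?_of_memS hv
  obtain ⟨q, rfl⟩ := hwv
  rw [subtree?_append] at hsv
  obtain ⟨s, hs, hsq⟩ := Option.bind_eq_some_iff.1 hsv
  exact ⟨hw, s, hs, (minLeaf_le_of_subtree? hsq).trans
    (((hT.of_subtree? hs).of_subtree? hsq).minLeaf_le_label.trans hsvr)⟩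

theorem exists_memS_of_mem_aliveSince (hT : T.LocalValid) (hrt : r' ≤ t)
    (hw : w ∈ T.aliveSince r' t) : ∃ v, T.MemS r' v ∧ w <+: v := by
  obtain ⟨hwt, s, hs, hsr⟩ := hw
  obtain ⟨q, sq, hq, hsq⟩ := exists_subtree?_label_eq_minLeaf s
  have hwq : T.subtree? (w ++ q) = some sq := by rw [subtree?_append, hs, Option.bind_some, hq]
  obtain ⟨v, hv, hvwq⟩ := exists_memS_prefix hwq (hsq.trans_le hsr)
  refine ⟨v, hv, ?_⟩
  rcases List.prefix_or_prefix_of_prefix hvwq (List.prefix_append w q) with hvw | hwv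
  · -- an ancestor of `w` in `S_T(r')` would have label `≤ t`, so it is `w` itself
    by_contra hne
    obtain ⟨sv, hsv, hsvr⟩ := exists_subtree?_of_memS hv
    exact (hT.lt_label_of_memS hwt hvw (fun h => hne (h ▸ hvw)) hsv).not_ge (hsvr.trans hrt)
  · exact hwv

theorem image_val_range_eq_aliveSince (hT : T.LocalValid) (hrt : r' ≤ t)
    (σ : {w // T.MemS r' w} → {w // T.MemS t w}) (hσ : ∀ v, (σ v).1 <+: v.1) :
    Subtype.val '' Set.range σ = T.aliveSince r' t := by
  ext w
  constructor
  · rintro ⟨_, ⟨v, rfl⟩, rfl⟩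
    exact hT.mem_aliveSince_of_prefix v.2 (σ v).2 (hσ v)
  · intro hw
    obtain ⟨v, hv, hwv⟩ := hT.exists_memS_of_mem_aliveSince hrt hw
    refine ⟨σ ⟨v, hv⟩, ⟨_, rfl⟩, ?_⟩
    rcases List.prefix_or_prefix_of_prefix (hσ ⟨v, hv⟩) hwv with h | h
    · exact hT.eq_of_memS_of_prefix (σ _).2 hw.1 h
    · exact (hT.eq_of_memS_of_prefix hw.1 (σ _).2 h).symm

end LocalValid

theorem aliveSince_leaf (hrt : r' ≤ t) : (leaf a).aliveSince r' t = {w | w = [] ∧ a ≤ r'} := by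
  ext w
  simp only [aliveSince, memS_leaf_iff, Set.mem_ofPred_eq]
  constructor
  · rintro ⟨⟨rfl, -⟩, s, hs, hsr⟩
    cases hs
    exact ⟨rfl, hsr⟩
  · rintro ⟨rfl, h⟩
    exact ⟨⟨rfl, h.trans hrt⟩, leaf a, rfl, h⟩

theorem LocalValid.aliveSince_of_label_le (hT : T.LocalValid) (hat : T.label ≤ t) :
    T.aliveSince r' t = {w | w = [] ∧ T.minLeaf ≤ r'} := by
  ext w
  constructor
  · rintro ⟨hw, s, hs, hsr⟩
    obtain rfl := hT.eq_nil_of_memS hat hw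
    cases (subtree?_nil T).symm.trans hs
    exact ⟨rfl, hsr⟩
  · rintro ⟨rfl, h⟩
    exact ⟨memS_nil_iff.2 hat, T, subtree?_nil T, h⟩

theorem aliveSince_node (hta : t < a) : (node a l r).aliveSince r' t =
    List.cons false '' l.aliveSince r' t ∪ List.cons true '' r.aliveSince r' t := by
  ext w
  cases w with
  | nil => simp [aliveSince, memS_nil_iff, label, hta.not_ge]
  | cons b w => cases b <;>
      simp [aliveSince, memS_node_false_cons hta, memS_node_true_cons hta, subtree?]

namespace Valid

theorem left (hT : (node a l r).Valid) : l.Valid :=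
  ⟨(List.nodup_cons.1 hT.1).2.of_append_left, hT.2.left⟩

theorem right (hT : (node a l r).Valid) : r.Valid :=
  ⟨(List.nodup_cons.1 hT.1).2.of_append_right, hT.2.right⟩

theorem disjoint_labelList (hT : (node a l r).Valid) : l.labelList.Disjoint r.labelList :=
  (List.nodup_cons.1 hT.1).2.disjoint

theorem minLeaf_ne (hT : (node a l r).Valid) : l.minLeaf ≠ r.minLeaf := fun h =>
  hT.disjoint_labelList (minLeaf_mem_labelList l) (h ▸ minLeaf_mem_labelList r)

end Valid

theorem LocalValid.exists_isLeast_of_mem_elder (hT : T.LocalValid) (hI : I ∈ T.Elder) :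
    ∃ x ∈ T.labelList, IsLeast I x := by
  induction T with
  | leaf a => exact ⟨a, List.mem_singleton_self a, (Set.mem_singleton_iff.1 hI) ▸ isLeast_Ici⟩
  | node a l r ihl ihr =>
    rcases hI with rfl | ⟨hI | hI, -⟩
    · refine ⟨_, ?_, isLeast_Ico (max_lt (hT.left.minLeaf_le_label.trans_lt hT.1)
        (hT.right.minLeaf_le_label.trans_lt hT.2.1))⟩
      rcases le_total l.minLeaf r.minLeaf with h | h
      · simp [max_eq_right h, labelList, minLeaf_mem_labelList]
      · simp [max_eq_left h, labelList, minLeaf_mem_labelList]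
    · obtain ⟨x, hx, hIx⟩ := ihl hT.left hI
      exact ⟨x, by simp [labelList, hx], hIx⟩
    · obtain ⟨x, hx, hIx⟩ := ihr hT.right hI
      exact ⟨x, by simp [labelList, hx], hIx⟩

theorem Valid.disjoint_elder (hT : (node a l r).Valid) : Disjoint l.Elder r.Elder := by
  refine Set.disjoint_left.2 fun I hl hr => ?_
  obtain ⟨x, hx, hIx⟩ := hT.2.left.exists_isLeast_of_mem_elder hl
  obtain ⟨y, hy, hIy⟩ := hT.2.right.exists_isLeast_of_mem_elder hr
  exact hT.disjoint_labelList hx (hIx.unique hIy ▸ hy)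

theorem LocalValid.eq_Ici_or_subset_Iio_of_mem_elder (hT : T.LocalValid) (hI : I ∈ T.Elder) :
    I = Set.Ici T.minLeaf ∨ I ⊆ Set.Iio T.label := by
  induction T with
  | leaf a => exact Or.inl hI
  | node a l r ihl ihr =>
    rcases hI with rfl | ⟨hI | hI, hne⟩
    · exact Or.inr Set.Ico_subset_Iio_self
    · rcases ihl hT.left hI with rfl | hIl
      · have h : l.minLeaf ≤ r.minLeaf := le_of_not_gt fun h => hne (by rw [max_eq_left h.le]; rfl)
        exact Or.inl (by rw [minLeaf, min_eq_left h])
      · exact Or.inr (hIl.trans (Set.Iio_subset_Iio hT.1.le))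
    · rcases ihr hT.right hI with rfl | hIr
      · have h : r.minLeaf ≤ l.minLeaf := le_of_not_gt fun h => hne (by rw [max_eq_right h.le]; rfl)
        exact Or.inl (by rw [minLeaf, min_eq_right h])
      · exact Or.inr (hIr.trans (Set.Iio_subset_Iio hT.2.1.le))

theorem Valid.Ici_minLeaf_mem_elder (hT : T.Valid) : Set.Ici T.minLeaf ∈ T.Elder := by
  induction T with
  | leaf a => rfl
  | node a l r ihl ihr =>
    refine Or.inr ?_
    rcases lt_or_gt_of_ne hT.minLeaf_ne with h | h
    · rw [minLeaf, min_eq_left h.le, max_eq_right h.le]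
      exact ⟨Or.inl (ihl hT.left), fun he => h.ne (Set.Ici_injective he)⟩
    · rw [minLeaf, min_eq_right h.le, max_eq_left h.le]
      exact ⟨Or.inr (ihr hT.right), fun he => h.ne (Set.Ici_injective he)⟩

theorem LocalValid.Ico_notMem_elder {b c : ℝ} (hT : T.LocalValid) (hbc : b < c)
    (hc : T.label < c) : Set.Ico b c ∉ T.Elder := fun hI => by
  rcases hT.eq_Ici_or_subset_Iio_of_mem_elder hI with h | h
  · have : c ∈ Set.Ici T.minLeaf := Set.mem_Ici.2 (hT.minLeaf_le_label.trans hc.le)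
    exact (h ▸ this).2.false
  · exact ((le_max_right b T.label).trans_lt (h ⟨le_max_left _ _, max_lt hbc hc⟩)).false

theorem sep_elder_leaf (hrt : r' ≤ t) :
    {I ∈ (leaf a).Elder | r' ∈ I ∧ t ∈ I} = {I | I = Set.Ici a ∧ a ≤ r'} := by
  ext I
  simp only [Elder, Set.mem_singleton_iff, Set.mem_ofPred_eq]
  constructor
  · rintro ⟨rfl, hr, -⟩
    exact ⟨rfl, hr⟩
  · rintro ⟨rfl, h⟩
    exact ⟨rfl, h, h.trans hrt⟩

namespace Valid

theorem sep_elder_of_label_le (hT : T.Valid) (hat : T.label ≤ t) (hrt : r' ≤ t) :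
    {I ∈ T.Elder | r' ∈ I ∧ t ∈ I} = {I | I = Set.Ici T.minLeaf ∧ T.minLeaf ≤ r'} := by
  ext I
  constructor
  · rintro ⟨hI, hr, ht⟩
    rcases hT.2.eq_Ici_or_subset_Iio_of_mem_elder hI with rfl | hsub
    · exact ⟨rfl, hr⟩
    · exact absurd (hsub ht) hat.not_gt
  · rintro ⟨rfl, h⟩
    exact ⟨hT.Ici_minLeaf_mem_elder, h, h.trans hrt⟩

theorem encard_sep_elder_node (hT : (node a l r).Valid) (hta : t < a) (hrt : r' ≤ t) :
    {I ∈ (node a l r).Elder | r' ∈ I ∧ t ∈ I}.encard =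
      {I ∈ l.Elder | r' ∈ I ∧ t ∈ I}.encard + {I ∈ r.Elder | r' ∈ I ∧ t ∈ I}.encard := by
  set M := max l.minLeaf r.minLeaf
  have hMa : M < a := max_lt (hT.2.left.minLeaf_le_label.trans_lt hT.2.1)
    (hT.2.right.minLeaf_le_label.trans_lt hT.2.2.1)
  have hIci : Set.Ici M ∈ l.Elder ∪ r.Elder := by
    rcases le_total l.minLeaf r.minLeaf with h | h
    · rw [show M = r.minLeaf from max_eq_right h]
      exact Or.inr hT.right.Ici_minLeaf_mem_elder
    · rw [show M = l.minLeaf from max_eq_left h]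
      exact Or.inl hT.left.Ici_minLeaf_mem_elder
  have hIco : Set.Ico M a ∉ l.Elder ∪ r.Elder := by
    rintro (h | h)
    · exact hT.2.left.Ico_notMem_elder hMa hT.2.1 h
    · exact hT.2.right.Ico_notMem_elder hMa hT.2.2.1 h
  have hiff : r' ∈ Set.Ico M a ∧ t ∈ Set.Ico M a ↔ r' ∈ Set.Ici M ∧ t ∈ Set.Ici M :=
    ⟨fun h => ⟨h.1.1, h.2.1⟩, fun h => ⟨⟨h.1, hrt.trans_lt hta⟩, h.2, hta⟩⟩
  rw [Elder, Set.encard_sep_insert_sdiff_singleton hIci hIco hiff,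
    show {I ∈ l.Elder ∪ r.Elder | r' ∈ I ∧ t ∈ I} = _ from Set.sep_union,
    Set.encard_union_eq (hT.disjoint_elder.mono (Set.sep_subset _ _) (Set.sep_subset _ _))]

end Valid

theorem Valid.encard_aliveSince (hT : T.Valid) (hrt : r' ≤ t) :
    (T.aliveSince r' t).encard = {I ∈ T.Elder | r' ∈ I ∧ t ∈ I}.encard := by
  induction T with
  | leaf a =>
    rw [aliveSince_leaf hrt, sep_elder_leaf hrt]
    by_cases h : a ≤ r' <;> simp [h]
  | node a l r ihl ihr =>
    rcases le_or_gt a t with hat | hta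
    · rw [hT.2.aliveSince_of_label_le hat, hT.sep_elder_of_label_le hat hrt]
      by_cases h : (node a l r).minLeaf ≤ r' <;> simp [h]
    · rw [aliveSince_node hta, Set.encard_image_cons_union_image_cons Bool.false_ne_true,
        hT.encard_sep_elder_node hta hrt, ihl hT.left, ihr hT.right]

end CMT

/-- `|S_T(t)|` equals the number of bars of `Elder T` containing
`t`, and the cardinality of the image of the shift map `σ_{tr} : S_T(r) → S_T(t)`
(which sends each node to its unique ancestor, i.e. prefix, in `S_T(t)`) equals the
number of bars of `Elder T` containing both `r` and `t`. -/
theorem card_S_and_image_of_shift (T : CMT) (hT : T.Valid) (r t : ℝ) (hrt : r ≤ t)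
    (σ : {w : List Bool // T.MemS r w} → {w : List Bool // T.MemS t w})
    (hσ : ∀ v, (σ v).1 <+: v.1) :
    Nat.card {w : List Bool // T.MemS t w} = {I | I ∈ T.Elder ∧ t ∈ I}.ncard ∧
    (Set.range σ).ncard = {I | I ∈ T.Elder ∧ r ∈ I ∧ t ∈ I}.ncard := by
  constructor
  · rw [show Nat.card {w // T.MemS t w} = {w | T.MemS t w}.ncard from Nat.card_coe_set_eq _,
      hT.2.setOf_memS_eq_aliveSince, Set.ncard_def,
      hT.encard_aliveSince le_rfl, ← Set.ncard_def]
    simp only [and_self]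
  · rw [← Set.ncard_image_of_injective _ Subtype.val_injective,
      hT.2.image_val_range_eq_aliveSince hrt σ hσ, Set.ncard_def, hT.encard_aliveSince hrt,
      ← Set.ncard_def]
end

section
/- Let f and g be graph-equivalent continuous functions on [0,1]. If f realizes a valid chiral merge tree T, then g also realizes T. -/
open scoped Classical

/-!
A graph equivalence `φ` extends, by the identity outside `[0,1]`, to an order automorphism of `ℝ`
carrying each sublevel set of `f` onto the corresponding sublevel set of `g`. Its image map is
therefore a bijection between their components that preserves the left-to-right order and
inclusions, so composing it with a realization of `T` by `f` gives one by `g`.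
-/

open Set

lemma Homeomorph.image_mem_components (h : ℝ ≃ₜ ℝ) {A C : Set ℝ} (hC : C ∈ Components A) :
    h '' C ∈ Components (h '' A) := by
  obtain ⟨x, hx, rfl⟩ := hC
  exact ⟨h x, mem_image_of_mem _ hx, h.image_connectedComponentIn hx⟩

def Homeomorph.componentsEquiv (h : ℝ ≃ₜ ℝ) {A B : Set ℝ} (hAB : h '' A = B) :
    {C // C ∈ Components A} ≃ {D // D ∈ Components B} where
  toFun C := ⟨h '' C, hAB ▸ h.image_mem_components C.2⟩
  invFun D := ⟨h.symm '' D, by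
    have hD : D.1 ∈ Components (h '' A) := hAB ▸ D.2
    rw [← h.symm_image_image A]
    exact h.symm.image_mem_components hD⟩
  left_inv C := Subtype.ext (h.symm_image_image C)
  right_inv D := Subtype.ext (h.image_symm_image D)

lemma OrderIso.compLT_image_iff (Φ : ℝ ≃o ℝ) {C D : Set ℝ} :
    CompLT (Φ '' C) (Φ '' D) ↔ CompLT C D := by
  simp [CompLT]

theorem RealizesCMT.of_image_sublevel {f g : ℝ → ℝ} {T : CMT} (Φ : ℝ ≃o ℝ)
    (hΦ : ∀ t, Φ '' sublevel f t = sublevel g t) (hf : RealizesCMT f T) : RealizesCMT g T := by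
  obtain ⟨α, hbij, hord, hshift⟩ := hf
  let e t := (Φ.toHomeomorph.componentsEquiv (hΦ t)).symm
  refine ⟨fun t D => α t (e t D), fun t => (hbij t).comp (e t).bijective, fun t C D => ?_,
    fun r t hrt C D hCD => hshift r t hrt _ _ (image_mono hCD)⟩
  rw [← hord]
  exact Φ.symm.compLT_image_iff.symm

lemma StrictMonoOn.exists_orderIso_eqOn_Icc {φ : ℝ → ℝ} {a b : ℝ}
    (hmono : StrictMonoOn φ (Icc a b)) (hmaps : MapsTo φ (Icc a b) (Icc a b))
    (hsurj : SurjOn φ (Icc a b) (Icc a b)) : ∃ Φ : ℝ ≃o ℝ, EqOn Φ φ (Icc a b) := by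
  let Φ : ℝ → ℝ := fun x => if x ∈ Icc a b then φ x else x
  have hΦ : StrictMono Φ := by
    intro x y hxy
    by_cases hx : x ∈ Icc a b <;> by_cases hy : y ∈ Icc a b <;>
      simp only [Φ, hx, hy, if_true, if_false]
    · exact hmono hx hy hxy
    · have hby : b < y := by
        by_contra! h
        exact hy ⟨hx.1.trans hxy.le, h⟩
      exact (hmaps hx).2.trans_lt hby
    · have hxa : x < a := by
        by_contra! h
        exact hx ⟨h, hxy.le.trans hy.2⟩
      exact hxa.trans_le (hmaps hy).1
    · exact hxy
  have hΦsurj : Function.Surjective Φ := by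
    intro z
    by_cases hz : z ∈ Icc a b
    · obtain ⟨x, hx, rfl⟩ := hsurj hz
      exact ⟨x, if_pos hx⟩
    · exact ⟨z, if_neg hz⟩
  exact ⟨hΦ.orderIsoOfSurjective Φ hΦsurj, fun x hx => if_pos hx⟩

theorem GraphEquiv.exists_orderIso_image_sublevel {f g : ℝ → ℝ} (hfg : GraphEquiv f g) :
    ∃ Φ : ℝ ≃o ℝ, ∀ t, Φ '' sublevel f t = sublevel g t := by
  obtain ⟨φ, -, hmono, hmaps, hsurj, hfφ⟩ := hfg
  obtain ⟨Φ, hΦφ⟩ := hmono.exists_orderIso_eqOn_Icc hmaps hsurj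
  refine ⟨Φ, fun t => ?_⟩
  rw [(hΦφ.mono fun x hx => hx.1).image_eq]
  ext y
  constructor
  · rintro ⟨x, ⟨hx, hfx⟩, rfl⟩
    exact ⟨hmaps hx, hfφ x hx ▸ hfx⟩
  · rintro ⟨hy, hgy⟩
    obtain ⟨x, hx, rfl⟩ := hsurj hy
    exact ⟨x, ⟨hx, (hfφ x hx).symm ▸ hgy⟩, rfl⟩

theorem graph_equiv_preserves_cmt_general (f g : ℝ → ℝ)
    (hfg : GraphEquiv f g) (T : CMT) (hfT : RealizesCMT f T) :
    RealizesCMT g T := by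
  obtain ⟨Φ, hΦ⟩ := hfg.exists_orderIso_image_sublevel
  exact hfT.of_image_sublevel Φ hΦ

/-- graph-equivalent continuous functions on `[0,1]` realize the
same valid chiral merge trees. -/
theorem graph_equiv_preserves_cmt (f g : ℝ → ℝ)
    (hf : ContinuousOn f (Set.Icc 0 1)) (hg : ContinuousOn g (Set.Icc 0 1))
    (hfg : GraphEquiv f g) (T : CMT) (hT : T.Valid) (hfT : RealizesCMT f T) :
    RealizesCMT g T :=
  graph_equiv_preserves_cmt_general f g hfg T hfT
end

section
/- Let f, g : [0,1] → ℝ be continuous functions, let m ≥ 1, and let 0 = p₀ < p₁ < ⋯ < p_m = 1 and 0 = q₀ < q₁ < ⋯ < q_m = 1 be such that f is strictly monotone on each interval [p_{i-1}, p_i], g is strictly monotone on each interval [q_{i-1}, q_i], and f(p_i) = g(q_i) for all 0 ≤ i ≤ m. Then there is an increasing homeomorphism φ : [0,1] → [0,1] with φ(p_i) = q_i for all i and f = g ∘ φ; in particular f and g are graph-equivalent. -/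
open scoped Classical

/-! On a piece where `f` and `g` are strictly monotone, `f = g ∘ φ` forces `φ = g⁻¹ ∘ f`, and
since `f` and `g` take the same values at the endpoints, the intermediate value theorem makes this
an increasing bijection `[pᵢ, pᵢ₊₁] → [qᵢ, qᵢ₊₁]`; matching endpoint values also force `f` and `g`
to have the same direction of monotonicity. These bijections glue along the partition points, and
an increasing bijection between closed intervals is automatically continuous. -/

open Set

theorem MonotoneOn.continuousOn_of_image_Icc {α β : Type*} [LinearOrder α] [TopologicalSpace α]
    [OrderTopology α] [LinearOrder β] [TopologicalSpace β] [OrderTopology β] [DenselyOrdered β]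
    {φ : α → β} {a b : α} {c d : β}
    (hφ : MonotoneOn φ (Icc a b)) (himage : φ '' Icc a b = Icc c d) :
    ContinuousOn φ (Icc a b) := by
  have hmaps : MapsTo φ (Icc a b) (Icc c d) := himage ▸ mapsTo_image φ _
  have hsurj : Function.Surjective hmaps.restrict :=
    hmaps.restrict_surjective_iff.2 (himage ▸ surjOn_image φ _)
  have hmono : Monotone hmaps.restrict := fun x y hxy => hφ x.2 y.2 hxy
  rw [continuousOn_iff_continuous_domRestrict]
  exact continuous_subtype_val.comp (hmono.continuous_of_surjective hsurj)

theorem Icc_subset_Icc_of_lt_succ {α : Type*} [Preorder α] {p : ℕ → α} {m i : ℕ}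
    (hp : ∀ j < m, p j < p (j + 1)) (hi : i < m) : Icc (p i) (p (i + 1)) ⊆ Icc (p 0) (p m) :=
  have hmono := (strictMonoOn_Iic_of_lt_succ (ψ := p) hp).monotoneOn
  Icc_subset_Icc (hmono (Nat.zero_le m) hi.le (Nat.zero_le i))
    (hmono hi (mem_Iic.2 le_rfl) hi)

section Reparam

variable {α β γ : Type*}

structure IsReparam [Preorder α] [Preorder β] (f : α → γ) (g : β → γ) (φ : α → β)
    (a b : α) (c d : β) : Prop where
  strictMonoOn : StrictMonoOn φ (Icc a b)
  image_eq : φ '' Icc a b = Icc c d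
  eqOn : EqOn f (g ∘ φ) (Icc a b)

theorem IsReparam.mapsTo [Preorder α] [Preorder β] {f : α → γ} {g : β → γ} {φ : α → β}
    {a b : α} {c d : β} (hφ : IsReparam f g φ a b c d) : MapsTo φ (Icc a b) (Icc c d) :=
  hφ.image_eq ▸ mapsTo_image φ _

theorem IsReparam.surjOn [Preorder α] [Preorder β] {f : α → γ} {g : β → γ} {φ : α → β}
    {a b : α} {c d : β} (hφ : IsReparam f g φ a b c d) : SurjOn φ (Icc a b) (Icc c d) :=
  hφ.image_eq ▸ surjOn_image φ _

theorem IsReparam.continuousOn [LinearOrder α] [TopologicalSpace α] [OrderTopology α]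
    [LinearOrder β] [TopologicalSpace β] [OrderTopology β] [DenselyOrdered β]
    {f : α → γ} {g : β → γ} {φ : α → β} {a b : α} {c d : β} (hφ : IsReparam f g φ a b c d) :
    ContinuousOn φ (Icc a b) :=
  hφ.strictMonoOn.monotoneOn.continuousOn_of_image_Icc hφ.image_eq

theorem IsReparam.glue [LinearOrder α] [LinearOrder β] {f : α → γ} {g : β → γ} {φ ψ : α → β}
    {a b e : α} {c d h : β} (hφ : IsReparam f g φ a b c d) (hψ : IsReparam f g ψ b e d h)
    (hab : a ≤ b) (hbe : b ≤ e) (hcd : c ≤ d) (hdh : d ≤ h) (hφb : φ b = d) (hψb : ψ b = d) :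
    ∃ χ, IsReparam f g χ a e c h ∧ EqOn χ φ (Icc a b) ∧ EqOn χ ψ (Icc b e) := by
  set χ := fun x => if x ≤ b then φ x else ψ x
  have hχφ : EqOn χ φ (Icc a b) := fun x hx => if_pos hx.2
  have hχψ : EqOn χ ψ (Icc b e) := fun x hx => by
    by_cases hxb : x ≤ b
    · simp only [χ, le_antisymm hxb hx.1, hφb, hψb, ite_self]
    · exact if_neg hxb
  refine ⟨χ, ⟨?_, ?_, ?_⟩, hχφ, hχψ⟩ <;> rw [← Icc_union_Icc_eq_Icc hab hbe]
  · exact (hφ.strictMonoOn.congr hχφ.symm).union (hψ.strictMonoOn.congr hχψ.symm)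
      (isGreatest_Icc hab) (isLeast_Icc hbe)
  · rw [image_union, hχφ.image_eq, hχψ.image_eq, hφ.image_eq, hψ.image_eq,
      Icc_union_Icc_eq_Icc hcd hdh]
  · exact (hφ.eqOn.trans fun x hx => congrArg g (hχφ hx).symm).union
      (hψ.eqOn.trans fun x hx => congrArg g (hχψ hx).symm)

variable [ConditionallyCompleteLinearOrder α] [TopologicalSpace α] [OrderTopology α]
  [DenselyOrdered α] [ConditionallyCompleteLinearOrder β] [TopologicalSpace β] [OrderTopology β]
  [DenselyOrdered β] [LinearOrder γ] [TopologicalSpace γ] [OrderClosedTopology γ]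
  {f : α → γ} {g : β → γ} {a b : α} {c d : β}

theorem exists_isReparam_of_strictMonoOn (hab : a ≤ b) (hcd : c ≤ d)
    (hf : ContinuousOn f (Icc a b)) (hg : ContinuousOn g (Icc c d))
    (hfm : StrictMonoOn f (Icc a b)) (hgm : StrictMonoOn g (Icc c d))
    (ha : f a = g c) (hb : f b = g d) :
    ∃ ψ, IsReparam f g ψ a b c d ∧ ψ a = c ∧ ψ b = d := by
  have himage : f '' Icc a b = g '' Icc c d := by
    rw [hf.image_Icc_of_monotoneOn hab hfm.monotoneOn,
      hg.image_Icc_of_monotoneOn hcd hgm.monotoneOn, ha, hb]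
  set ψ := Function.invFunOn g (Icc c d) ∘ f
  have hex : ∀ x ∈ Icc a b, ∃ y ∈ Icc c d, g y = f x := fun x hx =>
    (himage ▸ mem_image_of_mem f hx : f x ∈ g '' Icc c d)
  have hmaps : MapsTo ψ (Icc a b) (Icc c d) := fun x hx => Function.invFunOn_mem (hex x hx)
  have hgψ {x} (hx : x ∈ Icc a b) : g (ψ x) = f x := Function.invFunOn_eq (hex x hx)
  have hψ_eq {x y} (hx : x ∈ Icc a b) (hy : y ∈ Icc c d) (hxy : f x = g y) : ψ x = y :=
    hgm.injOn (hmaps hx) hy ((hgψ hx).trans hxy)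
  refine ⟨ψ, ⟨fun x hx y hy hxy => ?_, ?_, fun x hx => (hgψ hx).symm⟩,
    hψ_eq (left_mem_Icc.2 hab) (left_mem_Icc.2 hcd) ha,
    hψ_eq (right_mem_Icc.2 hab) (right_mem_Icc.2 hcd) hb⟩
  · rw [← hgm.lt_iff_lt (hmaps hx) (hmaps hy), hgψ hx, hgψ hy]
    exact hfm hx hy hxy
  · refine hmaps.image_subset.antisymm fun y hy => ?_
    obtain ⟨x, hx, hxy⟩ := himage.symm ▸ mem_image_of_mem g hy
    exact ⟨x, hx, hψ_eq hx hy hxy⟩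

theorem exists_isReparam_of_strictMonoOn_or_strictAntiOn (hab : a < b) (hcd : c < d)
    (hf : ContinuousOn f (Icc a b)) (hg : ContinuousOn g (Icc c d))
    (hfm : StrictMonoOn f (Icc a b) ∨ StrictAntiOn f (Icc a b))
    (hgm : StrictMonoOn g (Icc c d) ∨ StrictAntiOn g (Icc c d))
    (ha : f a = g c) (hb : f b = g d) :
    ∃ ψ, IsReparam f g ψ a b c d ∧ ψ a = c ∧ ψ b = d := by
  have ha' := left_mem_Icc.2 hab.le
  have hb' := right_mem_Icc.2 hab.le
  have hc' := left_mem_Icc.2 hcd.le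
  have hd' := right_mem_Icc.2 hcd.le
  rcases hfm with hfm | hfm <;> rcases hgm with hgm | hgm
  · exact exists_isReparam_of_strictMonoOn hab.le hcd.le hf hg hfm hgm ha hb
  · exact absurd (hgm hc' hd' hcd) (ha ▸ hb ▸ hfm ha' hb' hab).asymm
  · exact absurd (hgm hc' hd' hcd) (ha ▸ hb ▸ hfm ha' hb' hab).asymm
  · obtain ⟨ψ, hψ, hψa, hψb⟩ := exists_isReparam_of_strictMonoOn (γ := γᵒᵈ) hab.le hcd.le hf hg
      hfm.dual_right hgm.dual_right ha hb
    exact ⟨ψ, ⟨hψ.strictMonoOn, hψ.image_eq, hψ.eqOn⟩, hψa, hψb⟩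

theorem exists_isReparam_of_partition (n : ℕ) (p : ℕ → α) (q : ℕ → β)
    (hp : ∀ i < n, p i < p (i + 1)) (hq : ∀ i < n, q i < q (i + 1))
    (hf : ∀ i < n, ContinuousOn f (Icc (p i) (p (i + 1))))
    (hg : ∀ i < n, ContinuousOn g (Icc (q i) (q (i + 1))))
    (hfm : ∀ i < n, StrictMonoOn f (Icc (p i) (p (i + 1))) ∨
      StrictAntiOn f (Icc (p i) (p (i + 1))))
    (hgm : ∀ i < n, StrictMonoOn g (Icc (q i) (q (i + 1))) ∨
      StrictAntiOn g (Icc (q i) (q (i + 1))))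
    (hval : ∀ i ≤ n, f (p i) = g (q i)) :
    ∃ φ, IsReparam f g φ (p 0) (p n) (q 0) (q n) ∧ ∀ i ≤ n, φ (p i) = q i := by
  induction n with
  | zero =>
    refine ⟨fun _ => q 0, ⟨?_, ?_, ?_⟩, fun i hi => by rw [Nat.le_zero.1 hi]⟩ <;>
      simp only [Icc_self]
    · exact Set.strictMonoOn_singleton (f := fun _ : α => q 0)
    · exact image_singleton
    · simpa using hval 0 le_rfl
  | succ n ih =>
    have hlt {i} (hi : i < n) : i < n + 1 := hi.trans n.lt_add_one
    obtain ⟨φ, hφ, hφp⟩ := ih (fun i hi => hp i (hlt hi)) (fun i hi => hq i (hlt hi))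
      (fun i hi => hf i (hlt hi)) (fun i hi => hg i (hlt hi)) (fun i hi => hfm i (hlt hi))
      (fun i hi => hgm i (hlt hi)) (fun i hi => hval i (hi.trans n.le_succ))
    obtain ⟨ψ, hψ, hψn, hψn'⟩ := exists_isReparam_of_strictMonoOn_or_strictAntiOn
      (hp n n.lt_add_one) (hq n n.lt_add_one) (hf n n.lt_add_one) (hg n n.lt_add_one)
      (hfm n n.lt_add_one) (hgm n n.lt_add_one) (hval n n.le_succ) (hval (n + 1) le_rfl)
    have hpmono := (strictMonoOn_Iic_of_lt_succ (ψ := p) hp).monotoneOn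
    have hqmono := (strictMonoOn_Iic_of_lt_succ (ψ := q) hq).monotoneOn
    have hpn : p 0 ≤ p n := hpmono (Nat.zero_le _) n.le_succ (Nat.zero_le n)
    have hqn : q 0 ≤ q n := hqmono (Nat.zero_le _) n.le_succ (Nat.zero_le n)
    obtain ⟨χ, hχ, hχφ, hχψ⟩ := hφ.glue hψ hpn (hp n n.lt_add_one).le hqn (hq n n.lt_add_one).le
      (hφp n le_rfl) hψn
    refine ⟨χ, hχ, fun i hi => ?_⟩
    rcases hi.lt_or_eq with hi | rfl
    · have hi := Nat.le_of_lt_succ hi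
      rw [hχφ ⟨hpmono (Nat.zero_le _) (hi.trans n.le_succ) (Nat.zero_le i),
        hpmono (hi.trans n.le_succ) n.le_succ hi⟩, hφp i hi]
    · rw [hχψ (right_mem_Icc.2 (hp n n.lt_add_one).le), hψn']

end Reparam

theorem matching_monotone_pieces_graph_equiv_general (f g : ℝ → ℝ)
    (hf : ContinuousOn f (Set.Icc 0 1)) (hg : ContinuousOn g (Set.Icc 0 1))
    (m : ℕ) (p q : ℕ → ℝ)
    (hp0 : p 0 = 0) (hpm : p m = 1) (hp : ∀ i < m, p i < p (i + 1))
    (hq0 : q 0 = 0) (hqm : q m = 1) (hq : ∀ i < m, q i < q (i + 1))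
    (hfm : ∀ i < m, StrictMonoOn f (Set.Icc (p i) (p (i + 1))) ∨
      StrictAntiOn f (Set.Icc (p i) (p (i + 1))))
    (hgm : ∀ i < m, StrictMonoOn g (Set.Icc (q i) (q (i + 1))) ∨
      StrictAntiOn g (Set.Icc (q i) (q (i + 1))))
    (hval : ∀ i ≤ m, f (p i) = g (q i)) :
    (∃ φ : ℝ → ℝ, ContinuousOn φ (Set.Icc 0 1) ∧ StrictMonoOn φ (Set.Icc 0 1) ∧
      Set.MapsTo φ (Set.Icc 0 1) (Set.Icc 0 1) ∧
      Set.SurjOn φ (Set.Icc 0 1) (Set.Icc 0 1) ∧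
      (∀ i ≤ m, φ (p i) = q i) ∧
      ∀ x ∈ Set.Icc (0:ℝ) 1, f x = g (φ x)) ∧
    GraphEquiv f g := by
  have hpieces {r : ℕ → ℝ} (hr : ∀ i < m, r i < r (i + 1)) (hr0 : r 0 = 0) (hrm : r m = 1)
      {i : ℕ} (hi : i < m) : Icc (r i) (r (i + 1)) ⊆ Icc 0 1 :=
    hr0 ▸ hrm ▸ Icc_subset_Icc_of_lt_succ hr hi
  obtain ⟨φ, hφ, hφp⟩ := exists_isReparam_of_partition m p q hp hq
    (fun i hi => hf.mono (hpieces hp hp0 hpm hi)) (fun i hi => hg.mono (hpieces hq hq0 hqm hi))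
    hfm hgm hval
  rw [hp0, hpm, hq0, hqm] at hφ
  have hcont := hφ.continuousOn
  exact ⟨⟨φ, hcont, hφ.strictMonoOn, hφ.mapsTo, hφ.surjOn, hφp, hφ.eqOn⟩,
    φ, hcont, hφ.strictMonoOn, hφ.mapsTo, hφ.surjOn, hφ.eqOn⟩

/-- if `f` and `g` are continuous on `[0,1]`, strictly monotone
on the pieces of partitions `p`, `q` of the same length, and have equal values at
corresponding partition points, then there is an increasing homeomorphism
`φ : [0,1] → [0,1]` with `φ (p i) = q i` and `f = g ∘ φ`; in particular `f` and
`g` are graph-equivalent. -/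
theorem matching_monotone_pieces_graph_equiv (f g : ℝ → ℝ)
    (hf : ContinuousOn f (Set.Icc 0 1)) (hg : ContinuousOn g (Set.Icc 0 1))
    (m : ℕ) (hm : 1 ≤ m) (p q : ℕ → ℝ)
    (hp0 : p 0 = 0) (hpm : p m = 1) (hp : ∀ i < m, p i < p (i + 1))
    (hq0 : q 0 = 0) (hqm : q m = 1) (hq : ∀ i < m, q i < q (i + 1))
    (hfm : ∀ i < m, StrictMonoOn f (Set.Icc (p i) (p (i + 1))) ∨
      StrictAntiOn f (Set.Icc (p i) (p (i + 1))))
    (hgm : ∀ i < m, StrictMonoOn g (Set.Icc (q i) (q (i + 1))) ∨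
      StrictAntiOn g (Set.Icc (q i) (q (i + 1))))
    (hval : ∀ i ≤ m, f (p i) = g (q i)) :
    (∃ φ : ℝ → ℝ, ContinuousOn φ (Set.Icc 0 1) ∧ StrictMonoOn φ (Set.Icc 0 1) ∧
      Set.MapsTo φ (Set.Icc 0 1) (Set.Icc 0 1) ∧
      Set.SurjOn φ (Set.Icc 0 1) (Set.Icc 0 1) ∧
      (∀ i ≤ m, φ (p i) = q i) ∧
      ∀ x ∈ Set.Icc (0:ℝ) 1, f x = g (φ x)) ∧
    GraphEquiv f g :=
  matching_monotone_pieces_graph_equiv_general f g hf hg m p q hp0 hpm hp hq0 hqm hq hfm hgm hval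
end
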